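/- arXiv:1305.3961 — 5 statements merged into one kernel-verified Lean document; each statement's English description precedes it below -/
import Mathlib

section
/- Let M ≥ 1 be an integer and let k ∈ 𝔏_M. Then the image of the set {p ∈ S_M : κ(p) = k} under the branch count map β is exactly the set of integer vectors b = (b_0, …, b_M) satisfying min{𝟙, k̃} ≤ b ≤ min{k, k̃} entrywise; equivalently, this image is the Cartesian product V_0 × V_1 × ⋯ × V_M, where V_n = {min{1, k̃_n}, min{1, k̃_n} + 1, …, min{k_n, k̃_n}}. -/
/-- Entry `i` of an integer sequence given as a list (default `0` out of range). -/
def ent (p : List ℤ) (i : ℕ) : ℤ := p.getD i 0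

/-- Excursions of `p` to depth `n`: maximal blocks `[a, c]` of consecutive
indices on which `p` is at least `n`. -/
def excSet (p : List ℤ) (n : ℤ) : Set (ℕ × ℕ) :=
  {ac | ac.1 ≤ ac.2 ∧ ac.2 ≤ p.length - 1 ∧
    (∀ i, ac.1 ≤ i → i ≤ ac.2 → n ≤ ent p i) ∧
    (ac.1 = 0 ∨ ent p (ac.1 - 1) < n) ∧
    (ac.2 = p.length - 1 ∨ ent p (ac.2 + 1) < n)}

/-- The left shift `(k_1, ..., k_M, 0)` of a vector `(k_0, ..., k_M)`. -/
def ktilde (M : ℕ) (k : Fin (M + 1) → ℕ) : Fin (M + 1) → ℕ :=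
  fun n => if h : (n : ℕ) + 1 < M + 1 then k ⟨(n : ℕ) + 1, h⟩ else 0

/-- A reflection scattering sequence for an `M`-layer medium: a sequence
`(p_0, ..., p_L)` with `L ≥ 2`, `p_0 = p_L = -1`, `p_i ∈ {0, ..., M}` for
`1 ≤ i ≤ L - 1`, and `|p_{i+1} - p_i| = 1` for all `0 ≤ i ≤ L - 1`. -/
def IsScat (M : ℕ) (p : List ℤ) : Prop :=
  3 ≤ p.length ∧ ent p 0 = -1 ∧ ent p (p.length - 1) = -1 ∧
  (∀ i, 1 ≤ i → i ≤ p.length - 2 → 0 ≤ ent p i ∧ ent p i ≤ (M : ℤ)) ∧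
  (∀ i, i < p.length - 1 → |ent p (i + 1) - ent p i| = 1)

/-- The transit count vector `κ(p)`: `k_n` is the number of excursions of `p`
to depth `n`. -/
noncomputable def kappa (M : ℕ) (p : List ℤ) : Fin (M + 1) → ℕ :=
  fun n => (excSet p ((n : ℕ) : ℤ)).ncard

/-- The branch count vector `β(p)`: `b_n` is the number of excursions of `p`
to depth `n` that contain some index `i` with `p_i ≥ n + 1`. -/
noncomputable def beta (M : ℕ) (p : List ℤ) : Fin (M + 1) → ℕ :=
  fun n => {ac ∈ excSet p ((n : ℕ) : ℤ) |
    ∃ i, ac.1 ≤ i ∧ i ≤ ac.2 ∧ ((n : ℕ) : ℤ) + 1 ≤ ent p i}.ncard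

/-
Consecutive entries differ by one, so an excursion to depth `n` starts exactly at an
up-crossing `p_i = n - 1, p_{i+1} = n`, and it goes deeper than `n` exactly when
`p_{i+2} = n + 1`. Hence `κ_n` and `β_n` count adjacent pairs and triples of `p`, and the bounds
become statements about such patterns: a branching up-crossing of `n` is followed by an
up-crossing of `n + 1`, and the first up-crossing of `n + 1` is preceded by a branching
up-crossing of `n`, since `p` starts at `-1`.

Conversely, the excursions are built level by level, starting from the deepest one: the
`k_{n+1}` excursions at depth `n + 1` are cut into `k_n` consecutive groups, exactly `b_n` of them
nonempty, and each group, glued with separators `n`, becomes one excursion at depth `n`. The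
single excursion at depth `0`, framed by `-1`, is the required sequence.
-/

theorem ent_cons_succ (x : ℤ) (l : List ℤ) (i : ℕ) : ent (x :: l) (i + 1) = ent l i := rfl

theorem ent_eq_getElem {l : List ℤ} {i : ℕ} (h : i < l.length) : ent l i = l[i] :=
  List.getD_eq_getElem l 0 h

theorem Int.eq_add_one_or_eq_sub_one_of_abs_sub_eq_one {x y : ℤ} (h : |y - x| = 1) :
    y = x + 1 ∨ y = x - 1 := by
  rcases abs_eq zero_le_one |>.1 h with h | h <;> omega

theorem isChain_iff_forall_ent {R : ℤ → ℤ → Prop} {l : List ℤ} :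
    l.IsChain R ↔ ∀ i < l.length - 1, R (ent l i) (ent l (i + 1)) := by
  rw [List.isChain_iff_getElem]
  refine forall_congr' fun i => ⟨fun h hi => ?_, fun h hi => ?_⟩
  · rw [ent_eq_getElem (by omega), ent_eq_getElem (by omega)]
    exact h (by omega)
  · rw [← ent_eq_getElem, ← ent_eq_getElem]
    exact h (by omega)

def crossCount (m : ℤ) : List ℤ → ℕ
  | x :: y :: t => (if x < m ∧ m ≤ y then 1 else 0) + crossCount m (y :: t)
  | _ => 0

def branchCount (m : ℤ) : List ℤ → ℕ
  | x :: y :: z :: t =>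
      (if x < m ∧ m ≤ y ∧ m + 1 ≤ z then 1 else 0) + branchCount m (y :: z :: t)
  | _ => 0

section Counts

variable {m : ℤ}

theorem crossCount_eq_card (l : List ℤ) :
    crossCount m l = ((Finset.range (l.length - 1)).filter
      (fun i => ent l i < m ∧ m ≤ ent l (i + 1))).card := by
  match l with
  | [] | [_] => simp [crossCount]
  | x :: y :: t =>
    rw [crossCount, crossCount_eq_card (y :: t), Finset.card_filter, Finset.card_filter,
      show (x :: y :: t).length - 1 = t.length + 1 from rfl, Finset.sum_range_succ', add_comm]
    rfl

theorem branchCount_eq_card (l : List ℤ) :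
    branchCount m l = ((Finset.range (l.length - 2)).filter
      (fun i => ent l i < m ∧ m ≤ ent l (i + 1) ∧ m + 1 ≤ ent l (i + 2))).card := by
  match l with
  | [] | [_] | [_, _] => simp [branchCount]
  | x :: y :: z :: t =>
    rw [branchCount, branchCount_eq_card (y :: z :: t), Finset.card_filter, Finset.card_filter,
      show (x :: y :: z :: t).length - 2 = t.length + 1 from rfl, Finset.sum_range_succ', add_comm]
    rfl

theorem branchCount_le_crossCount (l : List ℤ) : branchCount m l ≤ crossCount m l := by
  match l with
  | [] | [_] | [_, _] => simp [branchCount]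
  | x :: y :: z :: t =>
    have := branchCount_le_crossCount (y :: z :: t)
    rw [branchCount, crossCount]
    split_ifs <;> omega

theorem crossCount_le_crossCount_cons (x : ℤ) (l : List ℤ) :
    crossCount m l ≤ crossCount m (x :: l) := by
  cases l with
  | nil => simp [crossCount]
  | cons y t => rw [crossCount.eq_1 m x y t]; omega

theorem crossCount_eq_zero {l : List ℤ} (h : ∀ x ∈ l, ∀ y ∈ l, x < m → y < m) :
    crossCount m l = 0 := by
  match l with
  | [] | [_] => rfl
  | x :: y :: t =>
    rw [crossCount, crossCount_eq_zero fun a ha b hb => h a (.tail _ ha) b (.tail _ hb)]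
    have := h x (by simp) y (by simp)
    split_ifs <;> omega

theorem exists_le_of_crossCount_pos {l : List ℤ} (h : 0 < crossCount m l) :
    ∃ y ∈ l, m ≤ y := by
  by_contra! hl
  exact h.ne' (crossCount_eq_zero fun _ _ y hy _ => hl y hy)

theorem crossCount_append_cons_of_lt {s : List ℤ} {x : ℤ} (t : List ℤ)
    (hs : ∀ y ∈ s, x < y) :
    crossCount m (s ++ x :: t) = crossCount m s + crossCount m (x :: t) := by
  match s with
  | [] => simp [crossCount]
  | [a] =>
    have := hs a (by simp)
    simp only [List.singleton_append, crossCount]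
    split_ifs <;> omega
  | a :: b :: s =>
    rw [List.cons_append, List.cons_append, crossCount, ← List.cons_append,
      crossCount_append_cons_of_lt t fun y hy => hs y (.tail _ hy), crossCount.eq_1 m a b s]
    omega

theorem branchCount_append_cons_of_lt {s : List ℤ} {x : ℤ} (t : List ℤ)
    (hs : ∀ y ∈ s, x < y) :
    branchCount m (s ++ x :: t) = branchCount m s + branchCount m (x :: t) := by
  match s, t with
  | [], _ => simp [branchCount]
  | [a], t =>
    have := hs a (by simp)
    cases t with
    | nil => rfl
    | cons c t =>
      simp only [List.singleton_append, branchCount]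
      split_ifs <;> omega
  | [a, b], t =>
    have := hs a (by simp)
    have := hs b (by simp)
    cases t <;> simp only [List.cons_append, List.nil_append, branchCount] <;> split_ifs <;> omega
  | a :: b :: c :: s, t =>
    rw [List.cons_append, List.cons_append, List.cons_append, branchCount, ← List.cons_append,
      ← List.cons_append, branchCount_append_cons_of_lt t fun y hy => hs y (.tail _ hy),
      branchCount.eq_1 m a b c s]
    omega

theorem branchCount_cons_le_crossCount_succ {x : ℤ} {l : List ℤ}
    (hl : (x :: l).IsChain (fun a b => |b - a| = 1)) :
    branchCount m (x :: l) ≤ crossCount (m + 1) l := by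
  match l, hl with
  | [], _ | [_], _ => simp [branchCount]
  | y :: z :: t, hl =>
    rw [List.isChain_cons_cons] at hl
    have ih := branchCount_cons_le_crossCount_succ hl.2
    have := Int.eq_add_one_or_eq_sub_one_of_abs_sub_eq_one hl.1
    rw [branchCount.eq_1, crossCount.eq_1]
    split_ifs <;> omega

theorem branchCount_cons_cons_pos {w x : ℤ} {l : List ℤ} (hw : w < m) (hx : x ≤ m)
    (hl : (x :: l).IsChain (fun a b => |b - a| = 1)) (hreach : ∃ y ∈ l, m + 1 ≤ y) :
    0 < branchCount m (w :: x :: l) := by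
  induction l generalizing w x with
  | nil => simp at hreach
  | cons y l ih =>
    rw [List.isChain_cons_cons] at hl
    have hxy := Int.eq_add_one_or_eq_sub_one_of_abs_sub_eq_one hl.1
    by_cases hpeak : x = m ∧ m + 1 ≤ y
    · rw [branchCount.eq_1, if_pos ⟨hw, hpeak.1.ge, hpeak.2⟩]
      omega
    have hym : y ≤ m := by omega
    have hreach' : ∃ z ∈ l, m + 1 ≤ z := by
      obtain ⟨z, hz, hmz⟩ := hreach
      rcases List.mem_cons.1 hz with rfl | hz
      · omega
      · exact ⟨z, hz, hmz⟩
    obtain ⟨z, l', rfl⟩ : ∃ z l', l = z :: l' := by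
      obtain ⟨z, hz, -⟩ := hreach'
      exact List.exists_cons_of_ne_nil (List.ne_nil_of_mem hz)
    rcases lt_or_eq_of_le hx with hx | rfl
    · have := ih hx hym hl.2 hreach'
      simp only [branchCount] at this ⊢
      omega
    · have := ih hw hym hl.2 hreach'
      simp only [branchCount] at this ⊢
      split_ifs at this ⊢ <;> omega

end Counts

section Excursions

variable {M : ℕ} {p : List ℤ} {n : ℤ}

theorem snd_eq_of_mem_excSet {a c c' : ℕ} (h : (a, c) ∈ excSet p n)
    (h' : (a, c') ∈ excSet p n) : c = c' := by
  obtain ⟨hac, hc, hall, -, hend⟩ := h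
  obtain ⟨hac', hc', hall', -, hend'⟩ := h'
  dsimp only at *
  by_contra hne
  rcases Nat.lt_or_gt_of_ne hne with hlt | hlt
  · rcases hend with hend | hend
    · omega
    · exact (hall' (c + 1) (by omega) (by omega)).not_gt hend
  · rcases hend' with hend' | hend'
    · omega
    · exact (hall (c' + 1) (by omega) (by omega)).not_gt hend'

theorem exists_mem_excSet {i : ℕ} (hi : i < p.length - 1) (hlt : ent p i < n)
    (hle : n ≤ ent p (i + 1)) : ∃ c, (i + 1, c) ∈ excSet p n := by
  classical
  have hex : ∃ j, i + 1 ≤ j ∧ (j = p.length - 1 ∨ ent p (j + 1) < n) :=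
    ⟨p.length - 1, by omega, Or.inl rfl⟩
  obtain ⟨hic, hend⟩ := Nat.find_spec hex
  refine ⟨Nat.find hex, hic, Nat.find_min' hex ⟨by omega, Or.inl rfl⟩, fun t ht htc => ?_,
    Or.inr (by simpa using hlt), hend⟩
  rcases Nat.eq_or_lt_of_le ht with rfl | ht
  · exact hle
  · have hmin := Nat.find_min hex (show t - 1 < Nat.find hex by omega)
    rw [← Nat.sub_add_cancel (show 1 ≤ t by omega)]
    exact not_lt.1 fun h => hmin ⟨by omega, Or.inr h⟩

theorem IsScat.one_le_of_mem_excSet (hp : IsScat M p) (hn : 0 ≤ n) {ac : ℕ × ℕ}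
    (h : ac ∈ excSet p n) : 1 ≤ ac.1 := by
  by_contra h0
  have := h.2.2.1 0 (by omega) (by omega)
  rw [hp.2.1] at this
  omega

theorem IsScat.ncard_excSet_filter (hp : IsScat M p) (hn : 0 ≤ n) (Q : ℕ → Prop)
    [DecidablePred Q] :
    {ac ∈ excSet p n | Q ac.1}.ncard = ((Finset.range (p.length - 1)).filter
      (fun i => (ent p i < n ∧ n ≤ ent p (i + 1)) ∧ Q (i + 1))).card := by
  have hinj : Set.InjOn (fun ac : ℕ × ℕ => ac.1 - 1) {ac ∈ excSet p n | Q ac.1} := by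
    rintro ⟨a, c⟩ ⟨h, -⟩ ⟨a', c'⟩ ⟨h', -⟩ heq
    have := hp.one_le_of_mem_excSet hn h
    have := hp.one_le_of_mem_excSet hn h'
    obtain rfl : a = a' := by dsimp only at *; omega
    rw [snd_eq_of_mem_excSet h h']
  rw [← Set.ncard_coe_finset, ← hinj.ncard_image]
  congr 1
  ext i
  simp only [Set.mem_image, Finset.coe_filter, Finset.mem_range, Set.mem_ofPred_eq]
  constructor
  · rintro ⟨⟨a, c⟩, ⟨h, hQ⟩, rfl⟩
    have ha := hp.one_le_of_mem_excSet hn h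
    obtain ⟨hac, hc, hall, hstart, -⟩ := h
    dsimp only at *
    rw [Nat.sub_add_cancel ha]
    exact ⟨by omega, ⟨hstart.resolve_left (by omega), hall a le_rfl hac⟩, hQ⟩
  · rintro ⟨hi, ⟨hlt, hle⟩, hQ⟩
    obtain ⟨c, hc⟩ := exists_mem_excSet hi hlt hle
    exact ⟨(i + 1, c), ⟨hc, hQ⟩, rfl⟩

theorem IsScat.kappa_eq_crossCount (hp : IsScat M p) (n : Fin (M + 1)) :
    kappa M p n = crossCount n p := by
  rw [kappa, ← Set.sep_true (s := excSet p _),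
    hp.ncard_excSet_filter (by positivity) fun _ => True, crossCount_eq_card]
  simp only [and_true]

theorem IsScat.step (hp : IsScat M p) {i : ℕ} (hi : i < p.length - 1) :
    ent p (i + 1) = ent p i + 1 ∨ ent p (i + 1) = ent p i - 1 :=
  Int.eq_add_one_or_eq_sub_one_of_abs_sub_eq_one (hp.2.2.2.2 i hi)

theorem IsScat.exists_le_ent_iff (hp : IsScat M p) (hn : 0 ≤ n) {a c : ℕ}
    (h : (a, c) ∈ excSet p n) :
    (∃ i, a ≤ i ∧ i ≤ c ∧ n + 1 ≤ ent p i) ↔ n + 1 ≤ ent p (a + 1) := by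
  have ha := hp.one_le_of_mem_excSet hn h
  obtain ⟨hac, hc, hall, hstart, hend⟩ := h
  dsimp only at *
  have hpa : ent p a = n := by
    have hstep := hp.step (i := a - 1) (by omega)
    rw [Nat.sub_add_cancel ha] at hstep
    have := hall a le_rfl hac
    have := hstart.resolve_left (by omega)
    omega
  constructor
  · rintro ⟨i, hai, hic, hi⟩
    obtain hia : a < i := lt_of_le_of_ne hai (by rintro rfl; omega)
    have := hall (a + 1) (by omega) (by omega)
    have := hp.step (i := a) (by omega)
    omega
  · intro h1
    refine ⟨a + 1, by omega, ?_, h1⟩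
    by_contra hca
    rcases hend with hend | hend
    · rw [ent, List.getD_eq_default _ _ (by omega)] at h1
      omega
    · rw [show c = a by omega] at hend
      omega

theorem IsScat.beta_eq_branchCount (hp : IsScat M p) (n : Fin (M + 1)) :
    beta M p n = branchCount n p := by
  have hn : (0 : ℤ) ≤ n := by positivity
  have hset : {ac ∈ excSet p n | ∃ i, ac.1 ≤ i ∧ i ≤ ac.2 ∧ (n : ℤ) + 1 ≤ ent p i} =
      {ac ∈ excSet p n | (n : ℤ) + 1 ≤ ent p (ac.1 + 1)} :=
    Set.ext fun ac => and_congr_right (hp.exists_le_ent_iff hn (a := ac.1) (c := ac.2))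
  rw [beta, hset, hp.ncard_excSet_filter hn fun a => (n : ℤ) + 1 ≤ ent p (a + 1),
    branchCount_eq_card,
    show p.length - 1 = p.length - 2 + 1 by have := hp.1; omega, Finset.range_add_one,
    Finset.filter_insert, if_neg]
  · simp only [and_assoc]
  · rw [show p.length - 2 + 1 = p.length - 1 by have := hp.1; omega, hp.2.2.1]
    omega

end Excursions

section Forward

variable {M : ℕ} {p : List ℤ}

theorem IsScat.isChain (hp : IsScat M p) : p.IsChain (fun a b => |b - a| = 1) :=
  isChain_iff_forall_ent.2 hp.2.2.2.2

theorem IsScat.le_of_mem (hp : IsScat M p) {x : ℤ} (hx : x ∈ p) : x ≤ M := by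
  obtain ⟨i, hi, rfl⟩ := List.getElem_of_mem hx
  obtain ⟨-, h0, hlast, hmid, -⟩ := hp
  rw [← ent_eq_getElem hi]
  rcases Nat.eq_zero_or_pos i with rfl | hi0
  · rw [h0]; omega
  · rcases Nat.lt_or_ge i (p.length - 1) with hi1 | hi1
    · exact (hmid i hi0 (by omega)).2
    · rw [show i = p.length - 1 by omega, hlast]; omega

theorem IsScat.exists_eq_cons_cons (hp : IsScat M p) : ∃ x l, p = -1 :: x :: l := by
  match p, hp with
  | y :: x :: l, hp => exact ⟨x, l, by rw [← hp.2.1]; rfl⟩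

theorem IsScat.branchCount_bounds (hp : IsScat M p) {m : ℤ} (hm : 0 ≤ m) :
    min 1 (crossCount (m + 1) p) ≤ branchCount m p ∧
      branchCount m p ≤ min (crossCount m p) (crossCount (m + 1) p) := by
  have hchain := hp.isChain
  obtain ⟨x, l, rfl⟩ := hp.exists_eq_cons_cons
  have hx := Int.eq_add_one_or_eq_sub_one_of_abs_sub_eq_one (List.isChain_cons_cons.1 hchain).1
  refine ⟨?_, le_min (branchCount_le_crossCount _) ?_⟩
  · rcases Nat.eq_zero_or_pos (crossCount (m + 1) (-1 :: x :: l)) with h | h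
    · simp [h]
    · obtain ⟨y, hy, hmy⟩ := exists_le_of_crossCount_pos h
      have hyl : y ∈ l := by
        rcases List.mem_cons.1 hy with rfl | hy
        · omega
        rcases List.mem_cons.1 hy with rfl | hy
        · omega
        exact hy
      exact (min_le_left _ _).trans (branchCount_cons_cons_pos (by omega) (by omega)
        (List.isChain_cons_cons.1 hchain).2 ⟨y, hyl, hmy⟩)
  · exact (branchCount_cons_le_crossCount_succ hchain).trans
      (crossCount_le_crossCount_cons _ _)

theorem IsScat.ktilde_kappa (hp : IsScat M p) (n : Fin (M + 1)) :
    ktilde M (kappa M p) n = crossCount ((n : ℤ) + 1) p := by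
  unfold ktilde
  split_ifs with h
  · rw [hp.kappa_eq_crossCount]
    push_cast
    rfl
  · refine (crossCount_eq_zero fun x hx y hy _ => ?_).symm
    have := hp.le_of_mem hy
    omega

theorem IsScat.beta_bounds (hp : IsScat M p) (n : Fin (M + 1)) :
    min 1 (ktilde M (kappa M p) n) ≤ beta M p n ∧
      beta M p n ≤ min (kappa M p n) (ktilde M (kappa M p) n) := by
  rw [hp.ktilde_kappa, hp.kappa_eq_crossCount, hp.beta_eq_branchCount]
  exact hp.branchCount_bounds (by positivity)

end Forward

structure IsExcursion (n : ℤ) (e : List ℤ) : Prop where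
  head?_eq : e.head? = some n
  getLast?_eq : e.getLast? = some n
  le_of_mem : ∀ x ∈ e, n ≤ x
  isChain : e.IsChain (fun a b => |b - a| = 1)

-- `glue v cs` is the excursion at depth `v` whose sub-excursions at depth `v + 1` are the
-- members of `cs`.
def glue (v : ℤ) : List (List ℤ) → List ℤ
  | [] => [v]
  | e :: cs => v :: (e ++ glue v cs)

theorem IsExcursion.crossCount_eq_zero_of_le {n m : ℤ} {e : List ℤ} (he : IsExcursion n e)
    (hm : m ≤ n) : crossCount m e = 0 :=
  crossCount_eq_zero fun x hx _ _ hlt => absurd hlt (not_lt.2 (hm.trans (he.le_of_mem x hx)))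

section Glue

variable {v m : ℤ} {cs : List (List ℤ)}

theorem glue_eq_cons (v : ℤ) (cs : List (List ℤ)) : ∃ r, glue v cs = v :: r := by
  cases cs <;> exact ⟨_, rfl⟩

theorem getLast?_glue (v : ℤ) (cs : List (List ℤ)) : (glue v cs).getLast? = some v := by
  induction cs with
  | nil => rfl
  | cons e cs ih =>
    obtain ⟨r, hr⟩ := glue_eq_cons v cs
    rw [glue, hr, ← List.cons_append, List.getLast?_append, ← hr, ih]
    rfl

theorem two_le_length_glue_iff : 2 ≤ (glue v cs).length ↔ cs ≠ [] := by
  cases cs with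
  | nil => simp [glue]
  | cons e cs =>
    obtain ⟨r, hr⟩ := glue_eq_cons v cs
    simp [glue, hr]; omega

theorem eq_or_exists_of_mem_glue {x : ℤ} (hx : x ∈ glue v cs) :
    x = v ∨ ∃ e ∈ cs, x ∈ e := by
  induction cs with
  | nil => simpa [glue] using hx
  | cons e cs ih =>
    simp only [glue, List.mem_cons, List.mem_append] at hx
    rcases hx with hx | hx | hx
    · exact .inl hx
    · exact .inr ⟨e, by simp, hx⟩
    · rcases ih hx with hx | ⟨e', he', hx⟩
      · exact .inl hx
      · exact .inr ⟨e', by simp [he'], hx⟩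

theorem IsExcursion.eq_cons (he : IsExcursion (v + 1) e) : ∃ e', e = (v + 1) :: e' := by
  match e, he.head?_eq with
  | _ :: e', rfl => exact ⟨e', rfl⟩

theorem isExcursion_glue (h : ∀ e ∈ cs, IsExcursion (v + 1) e) : IsExcursion v (glue v cs) := by
  refine ⟨by cases cs <;> rfl, getLast?_glue v cs, fun x hx => ?_, ?_⟩
  · rcases eq_or_exists_of_mem_glue hx with rfl | ⟨e, he, hx⟩
    · exact le_rfl
    · linarith [(h e he).le_of_mem x hx]
  · induction cs with
    | nil => exact List.isChain_singleton v
    | cons e cs ih =>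
      have he := h e (by simp)
      obtain ⟨e', rfl⟩ := he.eq_cons
      rw [glue, ← List.cons_append, List.isChain_append]
      refine ⟨List.isChain_cons_cons.2 ⟨by simp, he.isChain⟩,
        ih fun e he => h e (.tail _ he), ?_⟩
      obtain ⟨r, hr⟩ := glue_eq_cons v cs
      rintro x hx y hy
      rw [List.getLast?_cons_cons, he.getLast?_eq, Option.mem_some_iff] at hx
      rw [hr, List.head?_cons, Option.mem_some_iff] at hy
      subst hx hy
      simp

theorem crossCount_glue (h : ∀ e ∈ cs, IsExcursion (v + 1) e) :
    crossCount m (glue v cs) =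
      (cs.map (crossCount m)).sum + if m = v + 1 then cs.length else 0 := by
  induction cs with
  | nil => simp [glue, crossCount]
  | cons e cs ih =>
    have he := h e (by simp)
    obtain ⟨e', rfl⟩ := he.eq_cons
    obtain ⟨r, hr⟩ := glue_eq_cons v cs
    rw [glue, hr, List.cons_append, crossCount.eq_1, ← List.cons_append,
      crossCount_append_cons_of_lt _ fun y hy => by linarith [he.le_of_mem y hy], ← hr,
      ih fun e he => h e (.tail _ he)]
    simp only [List.map_cons, List.sum_cons, List.length_cons]
    split_ifs <;> omega

theorem branchCount_glue (h : ∀ e ∈ cs, IsExcursion (v + 1) e) :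
    branchCount m (glue v cs) = (cs.map (branchCount m)).sum +
      if m = v + 1 then cs.countP (fun e => 2 ≤ e.length) else 0 := by
  induction cs with
  | nil => simp [glue, branchCount]
  | cons e cs ih =>
    have he := h e (by simp)
    obtain ⟨e', rfl⟩ := he.eq_cons
    obtain ⟨r, hr⟩ := glue_eq_cons v cs
    have hsplit := branchCount_append_cons_of_lt (m := m) r
      fun y hy => by linarith [he.le_of_mem y hy]
    rw [← hr, ih fun e he => h e (.tail _ he), hr] at hsplit
    rw [glue, hr]
    cases e' with
    | nil =>
      simp only [List.cons_append, List.nil_append, branchCount] at hsplit ⊢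
      rw [hsplit, List.countP_cons_of_neg (by simp)]
      simp only [List.map_cons, List.sum_cons, branchCount]
      split_ifs <;> omega
    | cons z e'' =>
      have hz : z = v + 2 := by
        have := Int.eq_add_one_or_eq_sub_one_of_abs_sub_eq_one
          (List.isChain_cons_cons.1 he.isChain).1
        have := he.le_of_mem z (by simp)
        omega
      subst hz
      simp only [List.cons_append, branchCount] at hsplit ⊢
      rw [hsplit, List.map_cons, List.sum_cons, List.countP_cons_of_pos (by simp)]
      split_ifs <;> omega

variable {gs : List (List (List ℤ))}

theorem sum_crossCount_glue (h : ∀ g ∈ gs, ∀ e ∈ g, IsExcursion (v + 1) e) :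
    ((gs.map (glue v)).map (crossCount m)).sum =
      (gs.flatten.map (crossCount m)).sum + if m = v + 1 then gs.flatten.length else 0 := by
  induction gs with
  | nil => simp
  | cons g gs ih =>
    rw [List.map_cons, List.map_cons, List.sum_cons, crossCount_glue (h g (by simp)),
      ih fun g hg => h g (.tail _ hg), List.flatten_cons, List.map_append, List.sum_append,
      List.length_append]
    split_ifs <;> omega

theorem sum_branchCount_glue (h : ∀ g ∈ gs, ∀ e ∈ g, IsExcursion (v + 1) e) :
    ((gs.map (glue v)).map (branchCount m)).sum = (gs.flatten.map (branchCount m)).sum +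
      if m = v + 1 then gs.flatten.countP (fun e => 2 ≤ e.length) else 0 := by
  induction gs with
  | nil => simp
  | cons g gs ih =>
    rw [List.map_cons, List.map_cons, List.sum_cons, branchCount_glue (h g (by simp)),
      ih fun g hg => h g (.tail _ hg), List.flatten_cons, List.map_append, List.sum_append,
      List.countP_append]
    split_ifs <;> omega

end Glue

theorem List.exists_flatten_eq_countP_ne_nil {α : Type*} (l : List α) {b k : ℕ} (hbk : b ≤ k)
    (hbl : b ≤ l.length) (hl : l ≠ [] → 0 < b) :
    ∃ gs : List (List α), gs.length = k ∧ gs.flatten = l ∧ gs.countP (· ≠ []) = b := by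
  rcases Nat.eq_zero_or_pos b with rfl | hb
  · obtain rfl : l = [] := by by_contra h; exact (hl h).ne rfl
    exact ⟨replicate k [], length_replicate, flatten_replicate_nil, by simp⟩
  refine ⟨(l.take (b - 1)).map ([·]) ++ l.drop (b - 1) :: replicate (k - b) [], ?_, ?_, ?_⟩
  · rw [length_append, length_cons, length_map, length_take, length_replicate]
    omega
  · rw [flatten_append, flatten_cons, flatten_replicate_nil, append_nil, ← flatMap_def,
      flatMap_singleton', take_append_drop]
  · rw [countP_append, countP_cons_of_pos (by simp; omega), countP_eq_length.2 fun g hg => by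
      obtain ⟨x, -, rfl⟩ := mem_map.1 hg; simp,
      countP_eq_zero.2 (by simp), length_map, length_take]
    omega

-- `cs` lists the `k n` excursions at depth `n` of the sequence under construction, whose deeper
-- levels already carry the counts prescribed by `k` and `b`. An excursion goes deeper than its
-- base level iff it has at least two entries.
structure IsForest (k b : ℕ → ℕ) (M n : ℕ) (cs : List (List ℤ)) : Prop where
  length_eq : cs.length = k n
  isExcursion : ∀ e ∈ cs, IsExcursion n e
  le_of_mem : ∀ e ∈ cs, ∀ x ∈ e, x ≤ M
  sum_crossCount : ∀ m : ℕ, n < m → (cs.map (crossCount m)).sum = k m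
  sum_branchCount : ∀ m : ℕ, n < m → (cs.map (branchCount m)).sum = b m
  countP_eq : cs.countP (fun e => 2 ≤ e.length) = b n

section Forest

variable {k b : ℕ → ℕ} {M n : ℕ} {cs : List (List ℤ)}

theorem IsForest.exists_of_succ (h : IsForest k b M (n + 1) cs) (hn : n ≤ M)
    (hb : min 1 (k (n + 1)) ≤ b n ∧ b n ≤ min (k n) (k (n + 1))) :
    ∃ cs', IsForest k b M n cs' := by
  have hcs := h.length_eq
  obtain ⟨gs, hlen, rfl, hcount⟩ := List.exists_flatten_eq_countP_ne_nil cs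
    (b := b n) (k := k n) (by omega) (by omega) fun hne => by
      have := List.length_pos_of_ne_nil hne
      omega
  have hexc : ∀ g ∈ gs, ∀ e ∈ g, IsExcursion ((n : ℤ) + 1) e := fun g hg e he => by
    exact_mod_cast h.isExcursion e (List.mem_flatten_of_mem hg he)
  refine ⟨gs.map (glue n), by rw [List.length_map, hlen], ?_, ?_, fun m hm => ?_,
    fun m hm => ?_, ?_⟩
  · simp only [List.mem_map]
    rintro _ ⟨g, hg, rfl⟩
    exact isExcursion_glue (hexc g hg)
  · simp only [List.mem_map]
    rintro _ ⟨g, hg, rfl⟩ x hx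
    rcases eq_or_exists_of_mem_glue hx with rfl | ⟨e, he, hx⟩
    · exact_mod_cast hn
    · exact h.le_of_mem e (List.mem_flatten_of_mem hg he) x hx
  · rw [sum_crossCount_glue hexc]
    rcases Nat.lt_or_ge (n + 1) m with hm' | hm'
    · rw [if_neg (by omega), h.sum_crossCount m hm', add_zero]
    · obtain rfl : m = n + 1 := by omega
      rw [if_pos (by push_cast; rfl), List.sum_eq_zero fun c hc => ?_, h.length_eq, zero_add]
      obtain ⟨e, he, rfl⟩ := List.mem_map.1 hc
      exact (h.isExcursion e he).crossCount_eq_zero_of_le le_rfl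
  · rw [sum_branchCount_glue hexc]
    rcases Nat.lt_or_ge (n + 1) m with hm' | hm'
    · rw [if_neg (by omega), h.sum_branchCount m hm', add_zero]
    · obtain rfl : m = n + 1 := by omega
      rw [if_pos (by push_cast; rfl), List.sum_eq_zero fun c hc => ?_, h.countP_eq, zero_add]
      obtain ⟨e, he, rfl⟩ := List.mem_map.1 hc
      exact Nat.eq_zero_of_le_zero ((branchCount_le_crossCount e).trans_eq
        ((h.isExcursion e he).crossCount_eq_zero_of_le le_rfl))
  · rw [List.countP_map, ← hcount]
    exact List.countP_congr fun g _ => by simp [two_le_length_glue_iff]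

theorem exists_isForest_zero (hkM : ∀ m, M < m → k m = 0)
    (hbox : ∀ m, min 1 (k (m + 1)) ≤ b m ∧ b m ≤ min (k m) (k (m + 1))) :
    ∃ cs, IsForest k b M 0 cs := by
  have hb : ∀ m, M < m → b m = 0 := fun m hm => by
    have := (hbox m).2
    have := hkM m hm
    omega
  refine Nat.decreasingInduction (motive := fun n _ => ∃ cs, IsForest k b M n cs)
    (fun n hn ⟨cs, hcs⟩ => hcs.exists_of_succ (by omega) (hbox n)) ⟨[], ?_⟩
    (Nat.zero_le (M + 1))
  exact ⟨(hkM _ (by omega)).symm, by simp, by simp, fun m hm => (hkM m (by omega)).symm,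
    fun m hm => (hb m (by omega)).symm, (hb _ (by omega)).symm⟩

end Forest

theorem isScat_glue_neg_one {M : ℕ} {e : List ℤ} (he : IsExcursion 0 e)
    (hM : ∀ x ∈ e, x ≤ M) : IsScat M (glue (-1) [e]) := by
  have hne : e ≠ [] := by rintro rfl; exact absurd he.head?_eq (by simp)
  have hlen : (glue (-1) [e]).length = e.length + 2 := by simp [glue]
  have hchain := (isExcursion_glue (v := -1) fun e' he' => by
    obtain rfl := List.mem_singleton.1 he'; simpa using he).isChain
  refine ⟨by have := List.length_pos_of_ne_nil hne; omega, rfl, ?_, fun i hi hi' => ?_,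
    isChain_iff_forall_ent.1 hchain⟩
  · rw [hlen, show e.length + 2 - 1 = e.length + 1 by omega, glue, ent_cons_succ, ent,
      List.getD_append_right _ _ _ _ le_rfl]
    simp [glue]
  · obtain ⟨j, rfl⟩ : ∃ j, i = j + 1 := ⟨i - 1, by omega⟩
    rw [glue, ent_cons_succ, ent, List.getD_append _ _ _ _ (by omega), ← ent,
      ent_eq_getElem (by omega)]
    have hmem := List.getElem_mem (l := e) (n := j) (by omega)
    exact ⟨he.le_of_mem _ hmem, hM _ hmem⟩

theorem exists_isScat_crossCount_branchCount {k b : ℕ → ℕ} {M : ℕ} (hk0 : k 0 = 1)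
    (hkM : ∀ m, M < m → k m = 0)
    (hbox : ∀ m, min 1 (k (m + 1)) ≤ b m ∧ b m ≤ min (k m) (k (m + 1))) :
    ∃ p, IsScat M p ∧ (∀ m : ℕ, crossCount m p = k m) ∧
      ∀ m : ℕ, branchCount m p = b m := by
  obtain ⟨cs, hcs⟩ := exists_isForest_zero hkM hbox
  obtain ⟨e, rfl⟩ := List.length_eq_one_iff.1 (hcs.length_eq.trans hk0)
  have he : IsExcursion 0 e := by exact_mod_cast hcs.isExcursion e (by simp)
  have he' : ∀ e' ∈ [e], IsExcursion (-1 + 1) e' := fun e' he' => by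
    obtain rfl := List.mem_singleton.1 he'; simpa using he
  refine ⟨glue (-1) [e], isScat_glue_neg_one he (hcs.le_of_mem e (by simp)), fun m => ?_,
    fun m => ?_⟩
  · rw [crossCount_glue he']
    rcases Nat.eq_zero_or_pos m with rfl | hm
    · simp [he.crossCount_eq_zero_of_le le_rfl, hk0]
    · simpa [hm.ne'] using hcs.sum_crossCount m hm
  · rw [branchCount_glue he']
    rcases Nat.eq_zero_or_pos m with rfl | hm
    · simpa [Nat.eq_zero_of_le_zero ((branchCount_le_crossCount e).trans_eq
        (he.crossCount_eq_zero_of_le le_rfl))] using hcs.countP_eq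
    · simpa [hm.ne'] using hcs.sum_branchCount m hm

theorem ktilde_eq_extend (M : ℕ) (k : Fin (M + 1) → ℕ) (n : Fin (M + 1)) :
    ktilde M k n = Function.extend Fin.val k 0 (n + 1) := by
  unfold ktilde
  split_ifs with h
  · exact (Fin.val_injective.extend_apply k 0 ⟨_, h⟩).symm
  · exact (Function.extend_apply' (f := Fin.val) k 0 _ fun ⟨a, ha⟩ => h (ha ▸ a.isLt)).symm

theorem exists_isScat_kappa_beta {M : ℕ} {k b : Fin (M + 1) → ℕ} (hk0 : k 0 = 1)
    (hb : ∀ n, min 1 (ktilde M k n) ≤ b n ∧ b n ≤ min (k n) (ktilde M k n)) :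
    ∃ p, IsScat M p ∧ kappa M p = k ∧ beta M p = b := by
  set K := Function.extend Fin.val k 0
  set B := Function.extend Fin.val b 0
  have hK : ∀ n : Fin (M + 1), K n = k n := Fin.val_injective.extend_apply k 0
  have hB : ∀ n : Fin (M + 1), B n = b n := Fin.val_injective.extend_apply b 0
  have hout : ∀ m, M < m → K m = 0 ∧ B m = 0 := fun m hm =>
    have h : ¬∃ n : Fin (M + 1), n.val = m := fun ⟨n, hn⟩ => by omega
    ⟨Function.extend_apply' _ _ _ h, Function.extend_apply' _ _ _ h⟩
  have hbox : ∀ m, min 1 (K (m + 1)) ≤ B m ∧ B m ≤ min (K m) (K (m + 1)) := fun m => by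
    rcases Nat.lt_or_ge M m with hm | hm
    · simp [(hout m hm).2, (hout (m + 1) (by omega)).1]
    · have := hb ⟨m, by omega⟩
      rwa [ktilde_eq_extend, ← hK, ← hB] at this
  obtain ⟨p, hp, hcross, hbranch⟩ := exists_isScat_crossCount_branchCount
    (by rw [← hk0, ← hK]; rfl) (fun m hm => (hout m hm).1) hbox
  refine ⟨p, hp, funext fun n => ?_, funext fun n => ?_⟩
  · rw [hp.kappa_eq_crossCount, hcross, hK]
  · rw [hp.beta_eq_branchCount, hbranch, hB]

theorem branch_count_image_general (M : ℕ)
    (k : Fin (M + 1) → ℕ) (hk0 : k 0 = 1) :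
    beta M '' {p : List ℤ | IsScat M p ∧ kappa M p = k} =
      {b : Fin (M + 1) → ℕ | ∀ n,
        min 1 (ktilde M k n) ≤ b n ∧ b n ≤ min (k n) (ktilde M k n)} := by
  ext b
  constructor
  · rintro ⟨p, ⟨hp, rfl⟩, rfl⟩
    exact hp.beta_bounds
  · intro hb
    obtain ⟨p, hp, hk, rfl⟩ := exists_isScat_kappa_beta hk0 hb
    exact ⟨p, ⟨hp, hk⟩, rfl⟩

/-- Proposition 1 of the paper: for `k ∈ 𝔏_M`, the image of
`{p ∈ S_M | κ(p) = k}` under the branch count map `β` is exactly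
`{b | min{𝟙, k̃} ≤ b ≤ min{k, k̃}}` (entrywise). -/
theorem branch_count_image (M : ℕ) (hM : 1 ≤ M)
    (k : Fin (M + 1) → ℕ) (hk0 : k 0 = 1) (hk1 : ∀ n, k n = 0 → ktilde M k n = 0) :
    beta M '' {p : List ℤ | IsScat M p ∧ kappa M p = k} =
      {b : Fin (M + 1) → ℕ | ∀ n,
        min 1 (ktilde M k n) ≤ b n ∧ b n ≤ min (k n) (ktilde M k n)} :=
  branch_count_image_general M k hk0
end

section
/- Let M ≥ 1 be an integer, let R = (R_0, …, R_M) with −1 < R_j < 1 for all j, and let p ∈ S_M be a scattering sequence with κ(p) = k and β(p) = b. Then the weight of p satisfies w(p) = (−R)^{k̃−b} · R^{k−b} · T^{2b}, where k̃ = (k_1, …, k_M, 0) and powers of vectors are taken entrywise with the resulting products over the coordinates 0, …, M. -/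
/-- The weight factor attached to interior index `i` of the sequence `p`:
`R_j` if `p_{i-1} = p_{i+1} = p_i - 1`, `-R_j` if `p_{i-1} = p_{i+1} = p_i + 1`,
and the transmission coefficient `T_j = √(1 - R_j²)` otherwise (`j = p_i`). -/
noncomputable def wstep (R : ℤ → ℝ) (p : List ℤ) (i : ℕ) : ℝ :=
  if ent p (i - 1) = ent p i - 1 ∧ ent p (i + 1) = ent p i - 1 then R (ent p i)
  else if ent p (i - 1) = ent p i + 1 ∧ ent p (i + 1) = ent p i + 1 then -R (ent p i)
  else Real.sqrt (1 - R (ent p i) ^ 2)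

/-- The weight of a scattering sequence `p = (p_0, ..., p_L)`:
the product of the factors `w_i` for `1 ≤ i ≤ L - 1`. -/
noncomputable def weight (R : ℤ → ℝ) (p : List ℤ) : ℝ :=
  ∏ i ∈ Finset.Icc 1 (p.length - 2), wstep R p i

/-!
Group the interior indices `j` by their level `n = p_j` and classify each by whether the path
arrives from `n - 1` or `n + 1` and leaves to `n - 1` or `n + 1`; the factor `w_j` is `R_n`,
`-R_n` or `T_n` according to this class. Excursions to depth `n` start right after the up-steps
into level `n`, and the branching ones are those whose second step goes up again. Hence among the
visits to level `n`, `k_n` are entered from below, `b_n` are entered from below and left upwards,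
`k_{n+1}` are left upwards, and `k_n` are left downwards, since a path from `-1` to `-1` crosses
each level as often downwards as upwards. Solving these four relations gives `k_n - b_n` peaks,
`k_{n+1} - b_n` valleys and `2 b_n` transits.
-/

open Finset

theorem Finset.prod_ite_ite {ι M : Type*} [CommMonoid M] (s : Finset ι) (P Q : ι → Prop)
    [DecidablePred P] [DecidablePred Q] (a b c d : M) :
    ∏ i ∈ s, (if P i then (if Q i then a else b) else (if Q i then c else d)) =
      a ^ #{i ∈ s | P i ∧ Q i} * b ^ #{i ∈ s | P i ∧ ¬Q i} *
        (c ^ #{i ∈ s | ¬P i ∧ Q i} * d ^ #{i ∈ s | ¬P i ∧ ¬Q i}) := by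
  simp only [prod_ite, prod_const, filter_filter]

theorem Finset.card_filter_and_add_card_filter_and_not {ι : Type*} (s : Finset ι)
    (P Q : ι → Prop) [DecidablePred P] [DecidablePred Q] :
    #{i ∈ s | P i ∧ Q i} + #{i ∈ s | P i ∧ ¬Q i} = #{i ∈ s | P i} := by
  rw [← filter_filter, ← filter_filter, card_filter_add_card_filter_not]

def upSteps (p : List ℤ) (n : ℤ) : Finset ℕ :=
  {i ∈ range (p.length - 1) | ent p i = n - 1 ∧ ent p (i + 1) = n}

def downSteps (p : List ℤ) (n : ℤ) : Finset ℕ :=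
  {i ∈ range (p.length - 1) | ent p i = n ∧ ent p (i + 1) = n - 1}

def branchSteps (p : List ℤ) (n : ℤ) : Finset ℕ :=
  {i ∈ upSteps p n | ent p (i + 2) = n + 1}

def visits (p : List ℤ) (n : ℤ) : Finset ℕ :=
  {j ∈ Icc 1 (p.length - 2) | ent p j = n}

theorem excSet_injOn_fst (p : List ℤ) (n : ℤ) : Set.InjOn Prod.fst (excSet p n) := by
  have snd_le : ∀ {a c c'}, (a, c) ∈ excSet p n → (a, c') ∈ excSet p n → c ≤ c' := by
    rintro a c c' ⟨-, hc, hin, -, -⟩ ⟨hac', -, -, -, hend'⟩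
    by_contra! hlt
    have := hin (c' + 1) (by omega) (by omega)
    rcases hend' with h | h
    · omega
    · exact absurd h (not_lt.2 this)
  rintro ⟨a, c⟩ h ⟨a', c'⟩ h' (rfl : a = a')
  exact Prod.ext rfl (le_antisymm (snd_le h h') (snd_le h' h))

theorem ncard_eq_card_of_fst_image {S : Set (ℕ × ℕ)} {T : Finset ℕ}
    (hinj : Set.InjOn Prod.fst S)
    (himage : Prod.fst '' S = ↑(T.image (· + 1))) : S.ncard = #T := by
  rw [← hinj.ncard_image, himage, Set.ncard_coe_finset,
    card_image_of_injective _ (add_left_injective 1)]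

namespace IsScat

variable {M : ℕ} {p : List ℤ} {n : ℤ}

theorem step_s3 (hp : IsScat M p) {i : ℕ} (hi : i < p.length - 1) :
    ent p (i + 1) = ent p i + 1 ∨ ent p (i + 1) = ent p i - 1 := by
  have := hp.2.2.2.2 i hi
  rcases abs_eq (zero_le_one' ℤ) |>.1 this with h | h <;> omega

theorem mem_interior (hp : IsScat M p) {i : ℕ} (hi : i ≤ p.length - 1) (h : 0 ≤ ent p i) :
    1 ≤ i ∧ i ≤ p.length - 2 := by
  obtain ⟨-, h0, hlast, -, -⟩ := hp
  constructor
  · by_contra! hi0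
    obtain rfl : i = 0 := by omega
    omega
  · by_contra! hiL
    rw [show i = p.length - 1 by omega] at h
    omega

theorem pred_fst_mem_upSteps (hp : IsScat M p) (hn : 0 ≤ n) {a c : ℕ}
    (hac : (a, c) ∈ excSet p n) : 1 ≤ a ∧ a - 1 ∈ upSteps p n := by
  obtain ⟨hac, hcL, hin, hstart, -⟩ := hac
  have ha := hin a le_rfl hac
  have ha0 : a ≠ 0 := by rintro rfl; linarith [hp.2.1]
  have hprev : ent p (a - 1) < n := hstart.resolve_left ha0
  have hstep := hp.step_s3 (i := a - 1) (by omega)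
  rw [Nat.sub_add_cancel (by omega)] at hstep
  refine ⟨by omega, ?_⟩
  simp only [upSteps, mem_filter, mem_range, Nat.sub_add_cancel (Nat.one_le_iff_ne_zero.2 ha0)]
  omega

theorem exists_mem_excSet (hp : IsScat M p) (hn : 0 ≤ n) {i : ℕ} (hi : i ∈ upSteps p n) :
    ∃ c, (i + 1, c) ∈ excSet p n := by
  simp only [upSteps, mem_filter, mem_range] at hi
  obtain ⟨hiL, hprev, hfirst⟩ := hi
  have hlast : i + 1 ≤ p.length - 1 ∧ ent p (p.length - 1) < n :=
    ⟨by omega, by rw [hp.2.2.1]; omega⟩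
  have hexit : ∃ j, i + 1 ≤ j ∧ ent p j < n := ⟨_, hlast⟩
  have hle := Nat.find_min' hexit hlast
  obtain ⟨hj, hjn⟩ := Nat.find_spec hexit
  have hlt : i + 1 ≠ Nat.find hexit := by rintro h; rw [← h] at hjn; omega
  refine ⟨Nat.find hexit - 1, by omega, by omega, fun m hm1 hm2 => ?_, ?_, ?_⟩
  · exact not_lt.1 fun h => Nat.find_min hexit (m := m) (by omega) ⟨hm1, h⟩
  · right
    simp only [add_tsub_cancel_right]
    omega
  · right
    rwa [Nat.sub_add_cancel (by omega)]

theorem exists_le_ent_iff_of_mem_excSet (hp : IsScat M p) (hn : 0 ≤ n) {a c : ℕ}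
    (hac : (a, c) ∈ excSet p n) :
    (∃ i, a ≤ i ∧ i ≤ c ∧ n + 1 ≤ ent p i) ↔ ent p (a + 1) = n + 1 := by
  obtain ⟨ha1, hup⟩ := hp.pred_fst_mem_upSteps hn hac
  simp only [upSteps, mem_filter, mem_range, Nat.sub_add_cancel ha1] at hup
  obtain ⟨hac, hcL, hin, -, hend⟩ := hac
  dsimp only at hac hcL hin hend
  constructor
  · rintro ⟨i, hai, hic, hi⟩
    have hne : i ≠ a := by rintro rfl; omega
    have := hin (a + 1) (by omega) (by omega)
    rcases hp.step_s3 (i := a) (by omega) with h | h <;> omega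
  · intro h
    have hc : a + 1 ≤ c := by
      by_contra! hca
      obtain rfl : c = a := by omega
      have hlast := hp.2.2.1
      have := hin c le_rfl le_rfl
      rcases hend with h' | h'
      · rw [← h'] at hlast; omega
      · omega
    exact ⟨a + 1, by omega, hc, h.ge⟩

theorem fst_image_excSet (hp : IsScat M p) (hn : 0 ≤ n) :
    Prod.fst '' excSet p n = ↑((upSteps p n).image (· + 1)) := by
  ext a
  simp only [Set.mem_image, Prod.exists, exists_and_right, exists_eq_right, coe_image]
  constructor
  · rintro ⟨c, hac⟩
    obtain ⟨ha, hup⟩ := hp.pred_fst_mem_upSteps hn hac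
    exact ⟨a - 1, hup, Nat.sub_add_cancel ha⟩
  · rintro ⟨i, hi, rfl⟩
    exact hp.exists_mem_excSet hn hi

theorem fst_image_branch (hp : IsScat M p) (hn : 0 ≤ n) :
    Prod.fst '' {ac ∈ excSet p n | ∃ i, ac.1 ≤ i ∧ i ≤ ac.2 ∧ n + 1 ≤ ent p i} =
      ↑((branchSteps p n).image (· + 1)) := by
  ext a
  simp only [Set.mem_image, Set.mem_ofPred_eq, Prod.exists, exists_and_right, exists_eq_right,
    coe_image, branchSteps, coe_filter]
  constructor
  · rintro ⟨c, hac, hbr⟩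
    obtain ⟨ha, hup⟩ := hp.pred_fst_mem_upSteps hn hac
    refine ⟨a - 1, ⟨hup, ?_⟩, Nat.sub_add_cancel ha⟩
    rw [show a - 1 + 2 = a + 1 by omega]
    exact (hp.exists_le_ent_iff_of_mem_excSet hn hac).1 hbr
  · rintro ⟨i, ⟨hi, hbr⟩, rfl⟩
    obtain ⟨c, hc⟩ := hp.exists_mem_excSet hn hi
    exact ⟨c, hc, (hp.exists_le_ent_iff_of_mem_excSet hn hc).2 hbr⟩

theorem kappa_apply (hp : IsScat M p) (m : Fin (M + 1)) :
    kappa M p m = #(upSteps p m) :=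
  ncard_eq_card_of_fst_image (excSet_injOn_fst _ _) (hp.fst_image_excSet (by positivity))

theorem beta_apply (hp : IsScat M p) (m : Fin (M + 1)) :
    beta M p m = #(branchSteps p m) :=
  ncard_eq_card_of_fst_image ((excSet_injOn_fst _ _).mono fun _ h => h.1)
    (hp.fst_image_branch (by positivity))

theorem card_upSteps_eq_card_downSteps (hp : IsScat M p) (hn : 0 ≤ n) :
    #(upSteps p n) = #(downSteps p n) := by
  have htele : ∑ i ∈ range (p.length - 1),
      ((if n ≤ ent p (i + 1) then (1 : ℤ) else 0) - (if n ≤ ent p i then 1 else 0)) = 0 := by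
    rw [sum_range_sub (fun i => if n ≤ ent p i then (1 : ℤ) else 0), hp.2.2.1, hp.2.1]
    split_ifs <;> omega
  have hterm : ∀ i ∈ range (p.length - 1),
      (if n ≤ ent p (i + 1) then (1 : ℤ) else 0) - (if n ≤ ent p i then 1 else 0) =
        (if ent p i = n - 1 ∧ ent p (i + 1) = n then 1 else 0) -
          (if ent p i = n ∧ ent p (i + 1) = n - 1 then 1 else 0) := by
    intro i hi
    have := hp.step_s3 (mem_range.1 hi)
    split_ifs <;> omega
  rw [sum_congr rfl hterm, sum_sub_distrib, sum_boole, sum_boole, sub_eq_zero] at htele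
  exact_mod_cast htele

theorem upSteps_succ_top_eq_empty (hp : IsScat M p) : upSteps p (M + 1) = ∅ := by
  refine filter_eq_empty_iff.2 fun i hi ⟨_, hup⟩ => ?_
  have hint := hp.mem_interior (i := i + 1) (by simp at hi; omega) (by omega)
  have := (hp.2.2.2.1 (i + 1) hint.1 hint.2).2
  omega

theorem filter_visits_from_below (hp : IsScat M p) (hn : 0 ≤ n) :
    {j ∈ visits p n | ent p (j - 1) = n - 1} = (upSteps p n).image (· + 1) := by
  ext j
  simp only [visits, upSteps, mem_filter, mem_Icc, mem_image, mem_range]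
  constructor
  · rintro ⟨⟨⟨hj1, hjL⟩, hj⟩, hprev⟩
    refine ⟨j - 1, ⟨by omega, hprev, ?_⟩, Nat.sub_add_cancel hj1⟩
    rwa [Nat.sub_add_cancel hj1]
  · rintro ⟨i, ⟨hiL, hprev, hj⟩, rfl⟩
    exact ⟨⟨hp.mem_interior (by omega) (by omega), hj⟩, by simpa using hprev⟩

theorem filter_visits_to_above (hp : IsScat M p) (hn : 0 ≤ n) :
    {j ∈ visits p n | ent p (j + 1) = n + 1} = upSteps p (n + 1) := by
  ext j
  simp only [visits, upSteps, mem_filter, mem_Icc, mem_range]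
  constructor
  · rintro ⟨⟨⟨hj1, hjL⟩, hj⟩, hnext⟩
    exact ⟨by omega, by omega, hnext⟩
  · rintro ⟨hjL, hj, hnext⟩
    exact ⟨⟨hp.mem_interior (by omega) (by omega), by omega⟩, hnext⟩

theorem filter_visits_not_to_above (hp : IsScat M p) (hn : 0 ≤ n) :
    {j ∈ visits p n | ¬ent p (j + 1) = n + 1} = downSteps p n := by
  ext j
  simp only [visits, downSteps, mem_filter, mem_Icc, mem_range]
  constructor
  · rintro ⟨⟨⟨hj1, hjL⟩, hj⟩, hnext⟩
    have := hp.step_s3 (i := j) (by omega)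
    exact ⟨by omega, hj, by omega⟩
  · rintro ⟨hjL, hj, hnext⟩
    exact ⟨⟨hp.mem_interior (by omega) (by omega), hj⟩, by omega⟩

theorem filter_visits_branch (hp : IsScat M p) (hn : 0 ≤ n) :
    {j ∈ visits p n | ent p (j - 1) = n - 1 ∧ ent p (j + 1) = n + 1} =
      (branchSteps p n).image (· + 1) := by
  rw [← filter_filter, hp.filter_visits_from_below hn, filter_image]
  rfl

theorem wstep_of_mem_visits (hp : IsScat M p) (R : ℤ → ℝ) {j : ℕ} (hj : j ∈ visits p n) :
    wstep R p j =
      if ent p (j - 1) = n - 1 then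
        (if ent p (j + 1) = n + 1 then √(1 - R n ^ 2) else R n)
      else (if ent p (j + 1) = n + 1 then -R n else √(1 - R n ^ 2)) := by
  simp only [visits, mem_filter, mem_Icc] at hj
  obtain ⟨⟨hj1, hjL⟩, hj⟩ := hj
  have hin := hp.step_s3 (i := j - 1) (by omega)
  have hout := hp.step_s3 (i := j) (by omega)
  rw [Nat.sub_add_cancel hj1] at hin
  rw [wstep, hj]
  split_ifs <;> first | rfl | omega

theorem prod_wstep_visits (hp : IsScat M p) (hn : 0 ≤ n) (R : ℤ → ℝ) :
    ∏ j ∈ visits p n, wstep R p j =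
      (-R n) ^ (#(upSteps p (n + 1)) - #(branchSteps p n)) *
        R n ^ (#(upSteps p n) - #(branchSteps p n)) *
          √(1 - R n ^ 2) ^ (2 * #(branchSteps p n)) := by
  rw [prod_congr rfl fun j hj => hp.wstep_of_mem_visits R hj, prod_ite_ite]
  set V := visits p n
  set A : ℕ → Prop := fun j => ent p (j - 1) = n - 1
  set Q : ℕ → Prop := fun j => ent p (j + 1) = n + 1
  have hbranch : #{j ∈ V | A j ∧ Q j} = #(branchSteps p n) := by
    rw [hp.filter_visits_branch hn, card_image_of_injective _ (add_left_injective 1)]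
  have hentries : #{j ∈ V | A j ∧ Q j} + #{j ∈ V | A j ∧ ¬Q j} = #(upSteps p n) := by
    rw [card_filter_and_add_card_filter_and_not, hp.filter_visits_from_below hn,
      card_image_of_injective _ (add_left_injective 1)]
  have hups : #{j ∈ V | A j ∧ Q j} + #{j ∈ V | ¬A j ∧ Q j} = #(upSteps p (n + 1)) := by
    simp only [and_comm (b := Q _)]
    rw [card_filter_and_add_card_filter_and_not, hp.filter_visits_to_above hn]
  have hdowns : #{j ∈ V | A j ∧ ¬Q j} + #{j ∈ V | ¬A j ∧ ¬Q j} = #(upSteps p n) := by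
    simp only [and_comm (b := ¬Q _)]
    rw [card_filter_and_add_card_filter_and_not, hp.filter_visits_not_to_above hn,
      hp.card_upSteps_eq_card_downSteps hn]
  rw [show #{j ∈ V | A j ∧ ¬Q j} = #(upSteps p n) - #(branchSteps p n) by omega,
    show #{j ∈ V | ¬A j ∧ Q j} = #(upSteps p (n + 1)) - #(branchSteps p n) by omega,
    show #{j ∈ V | ¬A j ∧ ¬Q j} = #(branchSteps p n) by omega, hbranch]
  ring

theorem weight_eq_prod_visits (hp : IsScat M p) (R : ℤ → ℝ) :
    weight R p = ∏ m ∈ range (M + 1), ∏ j ∈ visits p m, wstep R p j := by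
  have hmaps : ∀ j ∈ Icc 1 (p.length - 2), (ent p j).toNat ∈ range (M + 1) := fun j hj => by
    have := hp.2.2.2.1 j (mem_Icc.1 hj).1 (mem_Icc.1 hj).2
    simp only [mem_range]
    omega
  rw [weight, ← prod_fiberwise_of_maps_to hmaps]
  refine prod_congr rfl fun m _ => prod_congr (filter_congr fun j hj => ?_) fun _ _ => rfl
  have := (hp.2.2.2.1 j (mem_Icc.1 hj).1 (mem_Icc.1 hj).2).1
  omega

theorem ktilde_kappa_s3 (hp : IsScat M p) (m : Fin (M + 1)) :
    ktilde M (kappa M p) m = #(upSteps p ((m : ℕ) + 1)) := by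
  rw [ktilde]
  split_ifs with h
  · rw [hp.kappa_apply]
    push_cast
    rfl
  · rw [show ((m : ℕ) : ℤ) = M by omega, hp.upSteps_succ_top_eq_empty, card_empty]

end IsScat

theorem weight_eq_general (M : ℕ) (R : ℤ → ℝ)
    (p : List ℤ) (hp : IsScat M p) (k b : Fin (M + 1) → ℕ)
    (hk : kappa M p = k) (hb : beta M p = b) :
    weight R p =
      ∏ n : Fin (M + 1),
        (-R ((n : ℕ) : ℤ)) ^ (ktilde M k n - b n) * R ((n : ℕ) : ℤ) ^ (k n - b n) *
          Real.sqrt (1 - R ((n : ℕ) : ℤ) ^ 2) ^ (2 * b n) := by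
  subst hk hb
  rw [hp.weight_eq_prod_visits, ← Fin.prod_univ_eq_prod_range
    (fun m : ℕ => ∏ j ∈ visits p m, wstep R p j)]
  refine prod_congr rfl fun m _ => ?_
  rw [hp.prod_wstep_visits (by positivity), hp.ktilde_kappa_s3, hp.kappa_apply, hp.beta_apply]

/-- Lemma 1 of the paper: for a scattering sequence `p` with `κ(p) = k` and
`β(p) = b`, the weight is `w(p) = (-R)^(k̃-b) · R^(k-b) · T^(2b)`. -/
theorem weight_eq (M : ℕ) (hM : 1 ≤ M) (R : ℤ → ℝ)
    (hR : ∀ j : Fin (M + 1), -1 < R ((j : ℕ) : ℤ) ∧ R ((j : ℕ) : ℤ) < 1)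
    (p : List ℤ) (hp : IsScat M p) (k b : Fin (M + 1) → ℕ)
    (hk : kappa M p = k) (hb : beta M p = b) :
    weight R p =
      ∏ n : Fin (M + 1),
        (-R ((n : ℕ) : ℤ)) ^ (ktilde M k n - b n) * R ((n : ℕ) : ℤ) ^ (k n - b n) *
          Real.sqrt (1 - R ((n : ℕ) : ℤ) ^ 2) ^ (2 * b n) :=
  weight_eq_general M R p hp k b hk hb
end

section
/- Let M ≥ 1 be an integer, let R = (R_0, …, R_M) with −1 < R_j < 1 for all j, and let p ∈ S′_M be a transmission scattering sequence with κ′(p) = k and β′(p) = m. Then the weight of p satisfies w(p) = (−R)^{k̃−m} · R^{k−m} · T^{2m+𝟙}, where k̃ = (k_1, …, k_M, 0), 𝟙 = (1, …, 1), and powers of vectors are taken entrywise with the resulting products over the coordinates 0, …, M. -/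
/-- A transmission scattering sequence for an `M`-layer medium: a sequence
`(p_0, ..., p_L)` with `p_0 = -1`, `p_L = M + 1`, `p_i ∈ {0, ..., M}` for
`1 ≤ i ≤ L - 1`, and `|p_{i+1} - p_i| = 1` for all `0 ≤ i ≤ L - 1`. -/
def IsTransScat (M : ℕ) (p : List ℤ) : Prop :=
  ent p 0 = -1 ∧ ent p (p.length - 1) = (M : ℤ) + 1 ∧
  (∀ i, 1 ≤ i → i ≤ p.length - 2 → 0 ≤ ent p i ∧ ent p i ≤ (M : ℤ)) ∧
  (∀ i, i < p.length - 1 → |ent p (i + 1) - ent p i| = 1)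

/-- The transmission transit count vector `κ'(p)`: `k_n` is the number of
excursions of `p` to depth `n` other than the trunk block (the excursion
containing the final index `L`). -/
noncomputable def kappaT (M : ℕ) (p : List ℤ) : Fin (M + 1) → ℕ :=
  fun n => {ac ∈ excSet p ((n : ℕ) : ℤ) | ac.2 ≠ p.length - 1}.ncard

/-- The transmission branch count vector `β'(p)`: `m_n` is the number of
excursions of `p` to depth `n`, other than the trunk block, that contain some
index `i` with `p_i ≥ n + 1`. -/
noncomputable def betaT (M : ℕ) (p : List ℤ) : Fin (M + 1) → ℕ :=
  fun n => {ac ∈ excSet p ((n : ℕ) : ℤ) | ac.2 ≠ p.length - 1 ∧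
    ∃ i, ac.1 ≤ i ∧ i ≤ ac.2 ∧ ((n : ℕ) : ℤ) + 1 ≤ ent p i}.ncard

/-!
Sort the interior indices `i` by the level `n = p_i` and by the levels `n + s`, `n + t` of their
neighbours. At level `n` there are peaks (`s = t = -1`, weight `R_n`), valleys (`s = t = 1`,
weight `-R_n`) and ascents and descents (`s = -t`, weight `T_n`). A non-trunk excursion to depth
`n` ends with a down-step `n → n - 1` and every such step ends one, so `k_n` counts peaks plus
descents; the excursion reaches depth `n + 1` exactly when its last index is a descent, so `m_n`
counts descents. Arrivals at `n` from above are the down-steps `n + 1 → n`, counted by `k_{n+1}`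
(none at `n = M`), so valleys plus descents number `k̃_n`. Finally the walk crosses from below `n`
to above it, so it steps up `n - 1 → n` once more than it steps down `n → n - 1`: ascents
outnumber descents by one.
-/

open Finset

namespace TransScat

def HasUnitSteps (p : List ℤ) : Prop :=
  ∀ i, i < p.length - 1 → |ent p (i + 1) - ent p i| = 1

def steps (p : List ℤ) (a b : ℤ) : Finset ℕ :=
  (range (p.length - 1)).filter fun i => ent p i = a ∧ ent p (i + 1) = b

def interior (p : List ℤ) : Finset ℕ := Icc 1 (p.length - 2)

def turns (p : List ℤ) (n s t : ℤ) : Finset ℕ :=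
  (interior p).filter fun i => ent p (i - 1) = n + s ∧ ent p i = n ∧ ent p (i + 1) = n + t

variable {M : ℕ} {p : List ℤ}

theorem HasUnitSteps.succ (h : HasUnitSteps p) {i : ℕ} (hi : i < p.length - 1) :
    ent p (i + 1) = ent p i + 1 ∨ ent p (i + 1) = ent p i - 1 := by
  rcases abs_eq zero_le_one |>.mp (h i hi) with h | h <;> omega

theorem HasUnitSteps.pred (h : HasUnitSteps p) {i : ℕ} (hi0 : i ≠ 0) (hi : i < p.length) :
    ent p (i - 1) = ent p i + 1 ∨ ent p (i - 1) = ent p i - 1 := by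
  have := h.succ (show i - 1 < p.length - 1 by omega)
  rw [Nat.sub_add_cancel (Nat.one_le_iff_ne_zero.mpr hi0)] at this
  omega

theorem _root_.IsTransScat.hasUnitSteps (hp : IsTransScat M p) : HasUnitSteps p := hp.2.2.2

theorem mem_excSet {n : ℤ} {a c : ℕ} :
    (a, c) ∈ excSet p n ↔ a ≤ c ∧ c ≤ p.length - 1 ∧ (∀ i, a ≤ i → i ≤ c → n ≤ ent p i) ∧
      (a = 0 ∨ ent p (a - 1) < n) ∧ (c = p.length - 1 ∨ ent p (c + 1) < n) :=
  Iff.rfl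

theorem excSet_snd_injOn (p : List ℤ) (n : ℤ) : Set.InjOn Prod.snd (excSet p n) := by
  rintro ⟨a, c⟩ hx ⟨a', c'⟩ hy (rfl : c = c')
  obtain ⟨hac, -, hge, ha, -⟩ := mem_excSet.mp hx
  obtain ⟨hac', -, hge', ha', -⟩ := mem_excSet.mp hy
  obtain hlt | rfl | hlt := lt_trichotomy a a'
  · have := hge (a' - 1) (by omega) (by omega); omega
  · rfl
  · have := hge' (a - 1) (by omega) (by omega); omega

theorem exists_mem_excSet {n : ℤ} {c : ℕ} (hc : n ≤ ent p c) (hcL : c ≤ p.length - 1)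
    (hr : c = p.length - 1 ∨ ent p (c + 1) < n) : ∃ a, (a, c) ∈ excSet p n := by
  classical
  have hex : ∃ a, ∀ j, a ≤ j → j ≤ c → n ≤ ent p j :=
    ⟨c, fun j h1 h2 => by rwa [le_antisymm h2 h1]⟩
  have hstart : Nat.find hex = 0 ∨ ent p (Nat.find hex - 1) < n := by
    refine or_iff_not_imp_left.mpr fun h0 => ?_
    have := Nat.find_min hex (Nat.sub_one_lt h0)
    push Not at this
    obtain ⟨j, hj, hjc, hjn⟩ := this
    obtain rfl | hj := hj.eq_or_lt
    · exact hjn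
    · exact absurd (Nat.find_spec hex j (by omega) hjc) (not_le.mpr hjn)
  exact ⟨Nat.find hex, Nat.find_min' hex fun j h1 h2 => by rwa [le_antisymm h2 h1], hcL,
    Nat.find_spec hex, hstart, hr⟩

theorem HasUnitSteps.ent_of_mem_excSet (h : HasUnitSteps p) {n : ℤ} {a c : ℕ}
    (hmem : (a, c) ∈ excSet p n) (hc : c ≠ p.length - 1) :
    c < p.length - 1 ∧ ent p c = n ∧ ent p (c + 1) = n - 1 := by
  obtain ⟨hac, hcL, hge, -, hr⟩ := mem_excSet.mp hmem
  have := hge c hac le_rfl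
  have := hr.resolve_left hc
  have := h.succ (show c < p.length - 1 by omega)
  omega

theorem HasUnitSteps.image_snd_excSet (h : HasUnitSteps p) (n : ℤ) :
    Prod.snd '' {ac ∈ excSet p n | ac.2 ≠ p.length - 1} = steps p n (n - 1) := by
  ext c
  simp only [Set.mem_image, Set.mem_ofPred_eq, Prod.exists, exists_eq_right, coe_filter,
    steps, mem_range]
  constructor
  · rintro ⟨a, hmem, hc⟩
    exact h.ent_of_mem_excSet hmem hc
  · rintro ⟨hcL, hcn, hcn'⟩
    obtain ⟨a, ha⟩ := exists_mem_excSet hcn.ge hcL.le (Or.inr (by omega))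
    exact ⟨a, ha, hcL.ne⟩

theorem HasUnitSteps.exists_gt_iff (h : HasUnitSteps p) {n : ℤ} {a c : ℕ}
    (hmem : (a, c) ∈ excSet p n) (hc : c ≠ p.length - 1) :
    (∃ i, a ≤ i ∧ i ≤ c ∧ n + 1 ≤ ent p i) ↔ ent p (c - 1) = n + 1 := by
  obtain ⟨hac, -, hge, ha, -⟩ := mem_excSet.mp hmem
  obtain ⟨hcL, hcn, -⟩ := h.ent_of_mem_excSet hmem hc
  constructor
  · rintro ⟨i, hai, hic, hi⟩
    have hic : i ≠ c := by rintro rfl; omega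
    have := hge (c - 1) (by omega) (by omega)
    have := h.succ (show c - 1 < p.length - 1 by omega)
    rw [Nat.sub_add_cancel (by omega)] at this
    omega
  · intro hc1
    refine ⟨c - 1, ?_, by omega, hc1.ge⟩
    rcases ha with rfl | ha
    · omega
    · by_contra! hlt
      rw [show a = c by omega] at ha
      omega

theorem HasUnitSteps.ncard_excSet_nontrunk (h : HasUnitSteps p) (n : ℤ) :
    {ac ∈ excSet p n | ac.2 ≠ p.length - 1}.ncard = #(steps p n (n - 1)) := by
  rw [← Set.ncard_coe_finset, ← h.image_snd_excSet,
    ((excSet_snd_injOn p n).mono (Set.sep_subset _ _)).ncard_image]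

theorem HasUnitSteps.ncard_excSet_nontrunk_gt (h : HasUnitSteps p) (n : ℤ) :
    {ac ∈ excSet p n | ac.2 ≠ p.length - 1 ∧ ∃ i, ac.1 ≤ i ∧ i ≤ ac.2 ∧ n + 1 ≤ ent p i}.ncard =
      #((steps p n (n - 1)).filter fun c => ent p (c - 1) = n + 1) := by
  have hset : {ac ∈ excSet p n | ac.2 ≠ p.length - 1 ∧
      ∃ i, ac.1 ≤ i ∧ i ≤ ac.2 ∧ n + 1 ≤ ent p i} =
      {ac ∈ excSet p n | ac.2 ≠ p.length - 1} ∩ Prod.snd ⁻¹' {c | ent p (c - 1) = n + 1} := by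
    ext ⟨a, c⟩
    simp only [Set.mem_ofPred_eq, Set.mem_inter_iff, Set.mem_preimage]
    constructor
    · rintro ⟨hmem, hc, hgt⟩
      exact ⟨⟨hmem, hc⟩, (h.exists_gt_iff hmem hc).mp hgt⟩
    · rintro ⟨⟨hmem, hc⟩, hc1⟩
      exact ⟨hmem, hc, (h.exists_gt_iff hmem hc).mpr hc1⟩
  rw [hset, ← ((excSet_snd_injOn p n).mono
    (Set.inter_subset_left.trans (Set.sep_subset _ _))).ncard_image, Set.image_inter_preimage,
    h.image_snd_excSet, ← Set.ncard_coe_finset, coe_filter]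
  rfl

theorem HasUnitSteps.card_steps_up (h : HasUnitSteps p) {n : ℤ} (h0 : ent p 0 < n)
    (hL : n ≤ ent p (p.length - 1)) : #(steps p (n - 1) n) = #(steps p n (n - 1)) + 1 := by
  let above (i : ℕ) : ℤ := if n ≤ ent p i then 1 else 0
  have hcross : ∑ i ∈ range (p.length - 1), (above (i + 1) - above i) = 1 := by
    rw [sum_range_sub]
    simp [above, hL, not_le.mpr h0]
  have hstep : ∀ i ∈ range (p.length - 1), above (i + 1) - above i =
      (if ent p i = n - 1 ∧ ent p (i + 1) = n then 1 else 0) -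
        (if ent p i = n ∧ ent p (i + 1) = n - 1 then 1 else 0) := by
    intro i hi
    have := h.succ (mem_range.mp hi)
    simp only [above]
    split_ifs <;> omega
  rw [sum_congr rfl hstep, sum_sub_distrib, sum_boole, sum_boole] at hcross
  simp only [steps]
  omega

section Turns

variable (p)

theorem disjoint_turns (n : ℤ) {s t s' t' : ℤ} (h : s ≠ s' ∨ t ≠ t') :
    Disjoint (turns p n s t) (turns p n s' t') := by
  simp only [turns, disjoint_filter]
  omega

variable {p}

theorem steps_down_eq_turns (hp : IsTransScat M p) {n : ℤ} (hn : 0 ≤ n) :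
    steps p n (n - 1) = turns p n (-1) (-1) ∪ turns p n 1 (-1) := by
  ext c
  simp only [steps, turns, interior, mem_union, mem_filter, mem_range, mem_Icc]
  constructor
  · rintro ⟨hc, hcn, hcn'⟩
    have hc0 : c ≠ 0 := by rintro rfl; have := hp.1; omega
    have := hp.hasUnitSteps.pred hc0 (by omega)
    omega
  · omega

theorem filter_steps_down_eq_turns (hp : IsTransScat M p) {n : ℤ} (hn : 0 ≤ n) :
    (steps p n (n - 1)).filter (fun c => ent p (c - 1) = n + 1) = turns p n 1 (-1) := by
  rw [steps_down_eq_turns hp hn, filter_union, filter_false_of_mem, filter_true_of_mem,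
    empty_union] <;>
  · simp only [turns, mem_filter]
    omega

theorem map_steps_eq_turns (hp : IsTransScat M p) {n : ℤ} (hn : n ≤ M) (s : ℤ) :
    (steps p (n + s) n).map (addRightEmbedding 1) = turns p n s (-1) ∪ turns p n s 1 := by
  have hL := hp.2.1
  ext j
  simp only [steps, turns, interior, mem_map, mem_union, mem_filter, mem_range, mem_Icc,
    addRightEmbedding_apply]
  constructor
  · rintro ⟨i, ⟨hi, hin, hin'⟩, rfl⟩
    have hiL : i + 1 ≠ p.length - 1 := by rintro h; rw [h] at hin'; omega
    have := hp.hasUnitSteps.succ (show i + 1 < p.length - 1 by omega)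
    simp only [Nat.add_sub_cancel]
    omega
  · rintro (⟨⟨hj, hjL⟩, hjs, hjn, -⟩ | ⟨⟨hj, hjL⟩, hjs, hjn, -⟩) <;>
    · refine ⟨j - 1, ⟨by omega, hjs, ?_⟩, by omega⟩
      rwa [Nat.sub_add_cancel hj]

theorem steps_top_eq_empty (hp : IsTransScat M p) : steps p (M + 1) M = ∅ := by
  refine filter_false_of_mem fun i hi ⟨hiM, _⟩ => ?_
  obtain rfl | hi0 := Nat.eq_zero_or_pos i
  · have := hp.1; omega
  · have := (hp.2.2.1 i hi0 (by have := mem_range.mp hi; omega)).2; omega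

theorem filter_interior_eq_turns (hp : IsTransScat M p) (n : ℤ) :
    (interior p).filter (fun i => ent p i = n) =
      (turns p n (-1) (-1) ∪ turns p n 1 1) ∪ (turns p n (-1) 1 ∪ turns p n 1 (-1)) := by
  ext i
  simp only [turns, mem_union, mem_filter, interior, mem_Icc]
  constructor
  · rintro ⟨⟨hi, hiL⟩, hin⟩
    have := hp.hasUnitSteps.pred (i := i) (by omega) (by omega)
    have := hp.hasUnitSteps.succ (i := i) (by omega)
    omega
  · omega

end Turns

section Weights

variable (R : ℤ → ℝ)

theorem wstep_of_mem_turns {n s t : ℤ} {i : ℕ} (hi : i ∈ turns p n s t) :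
    wstep R p i = if s = -1 ∧ t = -1 then R n else if s = 1 ∧ t = 1 then -R n
      else √(1 - R n ^ 2) := by
  obtain ⟨-, hs, hn, ht⟩ := mem_filter.mp hi
  simp only [wstep, hs, hn, ht]
  split_ifs <;> first | rfl | omega

theorem prod_wstep_filter_interior (hp : IsTransScat M p) (n : ℤ) :
    ∏ i ∈ (interior p).filter (fun i => ent p i = n), wstep R p i =
      (-R n) ^ #(turns p n 1 1) * R n ^ #(turns p n (-1) (-1)) *
        √(1 - R n ^ 2) ^ (#(turns p n (-1) 1) + #(turns p n 1 (-1))) := by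
  rw [filter_interior_eq_turns hp, prod_union, prod_union, prod_union,
    prod_eq_pow_card fun i => wstep_of_mem_turns R (p := p) (n := n) (s := -1) (t := -1),
    prod_eq_pow_card fun i => wstep_of_mem_turns R (p := p) (n := n) (s := 1) (t := 1),
    prod_eq_pow_card fun i => wstep_of_mem_turns R (p := p) (n := n) (s := -1) (t := 1),
    prod_eq_pow_card fun i => wstep_of_mem_turns R (p := p) (n := n) (s := 1) (t := -1)]
  · norm_num
    ring
  all_goals
    try simp only [disjoint_union_left, disjoint_union_right]
    repeat' apply And.intro
    all_goals exact disjoint_turns p n (by norm_num)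

theorem weight_eq_prod_levels (hp : IsTransScat M p) :
    weight R p = ∏ n : Fin (M + 1),
      ∏ i ∈ (interior p).filter (fun i => ent p i = ((n : ℕ) : ℤ)), wstep R p i := by
  have hmaps : ∀ i ∈ interior p,
      ent p i ∈ (univ : Finset (Fin (M + 1))).image fun n : Fin (M + 1) => ((n : ℕ) : ℤ) := by
    intro i hi
    obtain ⟨hi0, hiM⟩ := hp.2.2.1 i (mem_Icc.mp hi).1 (mem_Icc.mp hi).2
    exact mem_image.mpr ⟨⟨(ent p i).toNat, by omega⟩, mem_univ _, Int.toNat_of_nonneg hi0⟩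
  change ∏ i ∈ interior p, wstep R p i = _
  rw [← prod_fiberwise_of_maps_to hmaps, prod_image fun a _ b _ h => Fin.ext (by exact_mod_cast h)]

end Weights

theorem kappaT_eq_card_turns (hp : IsTransScat M p) (n : Fin (M + 1)) :
    kappaT M p n = #(turns p n (-1) (-1)) + #(turns p n 1 (-1)) := by
  rw [kappaT, hp.hasUnitSteps.ncard_excSet_nontrunk, steps_down_eq_turns hp (by positivity),
    card_union_of_disjoint (disjoint_turns p _ (by norm_num))]

theorem betaT_eq_card_turns (hp : IsTransScat M p) (n : Fin (M + 1)) :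
    betaT M p n = #(turns p n 1 (-1)) := by
  rw [betaT, hp.hasUnitSteps.ncard_excSet_nontrunk_gt,
    filter_steps_down_eq_turns hp (by positivity)]

theorem card_turns_ascent (hp : IsTransScat M p) (n : Fin (M + 1)) :
    #(turns p n (-1) 1) = #(turns p n 1 (-1)) + 1 := by
  have hn : ((n : ℕ) : ℤ) ≤ M := by exact_mod_cast n.is_le
  have hup := hp.hasUnitSteps.card_steps_up (n := n) (by rw [hp.1]; omega)
    (by rw [hp.2.1]; omega)
  have harrive := map_steps_eq_turns hp hn (-1)
  rw [← sub_eq_add_neg] at harrive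
  rw [← card_map (addRightEmbedding 1), harrive, steps_down_eq_turns hp (by positivity),
    card_union_of_disjoint (disjoint_turns p _ (by norm_num)),
    card_union_of_disjoint (disjoint_turns p _ (by norm_num))] at hup
  omega

theorem ktilde_kappaT_eq_card_turns (hp : IsTransScat M p) (n : Fin (M + 1)) :
    ktilde M (kappaT M p) n = #(turns p n 1 1) + #(turns p n 1 (-1)) := by
  have harrive : #(steps p (n + 1) n) = #(turns p n 1 1) + #(turns p n 1 (-1)) := by
    rw [← card_map (addRightEmbedding 1), map_steps_eq_turns hp (by exact_mod_cast n.is_le) 1,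
      union_comm, card_union_of_disjoint (disjoint_turns p _ (by norm_num))]
  rw [← harrive, ktilde]
  split_ifs with h
  · rw [kappaT, hp.hasUnitSteps.ncard_excSet_nontrunk]
    push_cast
    rw [add_sub_cancel_right]
  · rw [show (n : ℕ) = M by omega, steps_top_eq_empty hp, card_empty]

end TransScat

open TransScat

theorem trans_weight_eq_general (M : ℕ) (R : ℤ → ℝ)
    (p : List ℤ) (hp : IsTransScat M p) (k m : Fin (M + 1) → ℕ)
    (hk : kappaT M p = k) (hm : betaT M p = m) :
    weight R p =
      ∏ n : Fin (M + 1),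
        (-R ((n : ℕ) : ℤ)) ^ (ktilde M k n - m n) * R ((n : ℕ) : ℤ) ^ (k n - m n) *
          Real.sqrt (1 - R ((n : ℕ) : ℤ) ^ 2) ^ (2 * m n + 1) := by
  subst hk hm
  rw [weight_eq_prod_levels R hp]
  refine prod_congr rfl fun n _ => ?_
  rw [prod_wstep_filter_interior R hp, ktilde_kappaT_eq_card_turns hp, kappaT_eq_card_turns hp,
    betaT_eq_card_turns hp, card_turns_ascent hp, Nat.add_sub_cancel, Nat.add_sub_cancel]
  ring

/-- Lemma 3 of the paper: for a transmission scattering sequence `p` with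
`κ'(p) = k` and `β'(p) = m`, the weight is
`w(p) = (-R)^(k̃-m) · R^(k-m) · T^(2m+𝟙)`. -/
theorem trans_weight_eq (M : ℕ) (hM : 1 ≤ M) (R : ℤ → ℝ)
    (hR : ∀ j : Fin (M + 1), -1 < R ((j : ℕ) : ℤ) ∧ R ((j : ℕ) : ℤ) < 1)
    (p : List ℤ) (hp : IsTransScat M p) (k m : Fin (M + 1) → ℕ)
    (hk : kappaT M p = k) (hm : betaT M p = m) :
    weight R p =
      ∏ n : Fin (M + 1),
        (-R ((n : ℕ) : ℤ)) ^ (ktilde M k n - m n) * R ((n : ℕ) : ℤ) ^ (k n - m n) *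
          Real.sqrt (1 - R ((n : ℕ) : ℤ) ^ 2) ^ (2 * m n + 1) :=
  trans_weight_eq_general M R p hp k m hk hm
end

section
/- Let M ≥ 1 be an integer. Then the image of the set S_M of scattering sequences under the transit count map κ is exactly the set 𝔏_M; that is, κ(p) ∈ 𝔏_M for every p ∈ S_M, and for every k ∈ 𝔏_M there exists a scattering sequence p ∈ S_M with κ(p) = k. -/
/-! Since `p` starts and ends below every level `m ≥ 0`, each excursion to depth `m`
begins with exactly one upcrossing `p_i < m ≤ p_{i+1}`, so `κ(p)_m` counts upcrossings of `m`.
Only the first step of `p` upcrosses `0`, and `p` has no upcrossing of `m` exactly when it stays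
below `m`, which gives `κ(p) ∈ 𝔏_M`. Conversely, for `k ∈ 𝔏_M` the walk that climbs from `0` level
by level, bouncing `k_{n+1} - 1` extra times between `n` and `n + 1` on its way back down, and
stops at the first level `n` with `k_n = 0`, upcrosses each level `n` exactly `k_n` times. -/

open Finset

def upcrossings (m : ℤ) (p : List ℤ) : Finset ℕ :=
  (range (p.length - 1)).filter fun i => ent p i < m ∧ m ≤ ent p (i + 1)

/-- `upcrossCount m x t` is the number of upcrossings of level `m` by the walk `x :: t`. -/
def upcrossCount (m : ℤ) : ℤ → List ℤ → ℕ
  | _, [] => 0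
  | x, y :: t => (if x < m ∧ m ≤ y then 1 else 0) + upcrossCount m y t

theorem card_upcrossings_cons (m x : ℤ) (t : List ℤ) :
    #(upcrossings m (x :: t)) = upcrossCount m x t := by
  induction t generalizing x with
  | nil => rfl
  | cons y t ih =>
    rw [upcrossCount, ← ih, upcrossings, upcrossings, card_filter, card_filter]
    simp only [List.length_cons, Nat.add_sub_cancel]
    rw [sum_range_succ', add_comm]
    rfl

theorem upcrossCount_eq_zero_iff {m x : ℤ} {t : List ℤ} (hx : x < m) :
    upcrossCount m x t = 0 ↔ ∀ y ∈ t, y < m := by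
  induction t generalizing x with
  | nil => simp [upcrossCount]
  | cons y t ih =>
    by_cases hy : y < m
    · simp [upcrossCount, hy, ih hy, not_le.mpr hy]
    · simp [upcrossCount, hx, hy, not_lt.mp hy]

section Excursions

variable {p : List ℤ} {m : ℤ}

theorem snd_le_of_mem_excSet {a c c' : ℕ} (h : (a, c) ∈ excSet p m)
    (h' : (a, c') ∈ excSet p m) : c ≤ c' := by
  obtain ⟨-, hc, hge, -, -⟩ := h
  obtain ⟨hac', -, -, -, hend'⟩ := h'
  dsimp only at hc hge hac' hend'
  by_contra! hlt
  rcases hend' with hend' | hend'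
  · omega
  · have := hge (c' + 1) (by omega) (by omega)
    omega

theorem fst_pos_of_mem_excSet (h0 : ent p 0 < m) {ac : ℕ × ℕ} (h : ac ∈ excSet p m) :
    0 < ac.1 := by
  obtain ⟨hac, -, hge, -, -⟩ := h
  by_contra! hzero
  have := hge 0 (by omega) (by omega)
  omega

theorem exists_mem_excSet_of_mem_upcrossings (hlast : ent p (p.length - 1) < m) {i : ℕ}
    (hi : i ∈ upcrossings m p) : ∃ c, (i + 1, c) ∈ excSet p m := by
  classical
  simp only [upcrossings, mem_filter, mem_range] at hi
  obtain ⟨hi, hbefore, hstart⟩ := hi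
  have hlast' : ent p (i + 1 + (p.length - 1 - (i + 1))) < m := by
    rwa [show i + 1 + (p.length - 1 - (i + 1)) = p.length - 1 by omega]
  have hex : ∃ d, ent p (i + 1 + d) < m := ⟨_, hlast'⟩
  have hd := Nat.find_spec hex
  have hd_pos : 0 < Nat.find hex := Nat.pos_of_ne_zero fun h => by rw [h, add_zero] at hd; omega
  have hd_le : Nat.find hex ≤ p.length - 1 - (i + 1) := Nat.find_min' hex hlast'
  refine ⟨i + Nat.find hex, by omega, by omega, fun j hj hj' => ?_,
    Or.inr (by simpa using hbefore), Or.inr ?_⟩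
  · have := Nat.find_min hex (show j - (i + 1) < Nat.find hex by omega)
    rwa [show i + 1 + (j - (i + 1)) = j by omega, not_lt] at this
  · rwa [show i + Nat.find hex + 1 = i + 1 + Nat.find hex by omega]

/-- An excursion `[a, c]` to depth `m` starts right after the upcrossing at `a - 1`. -/
theorem ncard_excSet (h0 : ent p 0 < m) (hlast : ent p (p.length - 1) < m) :
    (excSet p m).ncard = #(upcrossings m p) := by
  rw [← Set.ncard_coe_finset]
  refine Set.ncard_congr (fun ac _ => ac.1 - 1) (fun ac hac => ?_) (fun ac ac' hac hac' heq => ?_)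
    (fun i hi => ?_)
  · have hpos := fst_pos_of_mem_excSet h0 hac
    obtain ⟨hac, hc, hge, hleft, -⟩ := hac
    have hstart := hge ac.1 le_rfl hac
    have hne : ac.1 ≠ p.length - 1 := fun h => by rw [h] at hstart; omega
    simp only [upcrossings, coe_filter, mem_range]
    exact ⟨by omega, hleft.resolve_left hpos.ne', by rwa [Nat.sub_add_cancel hpos]⟩
  · obtain ⟨a, c⟩ := ac
    obtain ⟨a', c'⟩ := ac'
    obtain rfl : a = a' := by
      have := fst_pos_of_mem_excSet h0 hac
      have := fst_pos_of_mem_excSet h0 hac'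
      simp only at heq this
      omega
    rw [le_antisymm (snd_le_of_mem_excSet hac hac') (snd_le_of_mem_excSet hac' hac)]
  · obtain ⟨c, hc⟩ := exists_mem_excSet_of_mem_upcrossings hlast hi
    exact ⟨(i + 1, c), hc, rfl⟩

end Excursions

section ScatteringSequences

variable {M : ℕ}

theorem kappa_eq_card_upcrossings {p : List ℤ} (hp : IsScat M p) (n : Fin (M + 1)) :
    kappa M p n = #(upcrossings n p) :=
  ncard_excSet (by rw [hp.2.1]; omega) (by rw [hp.2.2.1]; omega)

theorem kappa_cons_eq_upcrossCount {x : ℤ} {t : List ℤ} (hp : IsScat M (x :: t))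
    (n : Fin (M + 1)) : kappa M (x :: t) n = upcrossCount n x t := by
  rw [kappa_eq_card_upcrossings hp, card_upcrossings_cons]

theorem upcrossings_zero_of_isScat {p : List ℤ} (hp : IsScat M p) : upcrossings 0 p = {0} := by
  obtain ⟨hlen, h0, -, hmid, -⟩ := hp
  ext i
  simp only [upcrossings, mem_filter, mem_range, mem_singleton]
  constructor
  · rintro ⟨hi, hneg, -⟩
    by_contra hi0
    have := (hmid i (by omega) (by omega)).1
    omega
  · rintro rfl
    exact ⟨by omega, by rw [h0]; norm_num, (hmid 1 le_rfl (by omega)).1⟩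

theorem kappa_zero_of_isScat {p : List ℤ} (hp : IsScat M p) : kappa M p 0 = 1 := by
  rw [kappa_eq_card_upcrossings hp, Fin.val_zero, Nat.cast_zero, upcrossings_zero_of_isScat hp,
    card_singleton]

theorem kappa_eq_zero_iff {p : List ℤ} (hp : IsScat M p) (n : Fin (M + 1)) :
    kappa M p n = 0 ↔ ∀ x ∈ p, x < n := by
  obtain ⟨x, t, rfl⟩ : ∃ x t, p = x :: t := List.exists_cons_of_length_pos (by have := hp.1; omega)
  have hx : x = -1 := hp.2.1
  subst hx
  rw [kappa_cons_eq_upcrossCount hp, upcrossCount_eq_zero_iff (by omega), List.forall_mem_cons]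
  exact ⟨fun h => ⟨by omega, h⟩, And.right⟩

theorem isScat_of_isChain {q : List ℤ} (hq : q ≠ []) (hbound : ∀ x ∈ q, 0 ≤ x ∧ x ≤ M)
    (hchain : (-1 :: (q ++ [-1])).IsChain fun a b => |b - a| = 1) :
    IsScat M (-1 :: (q ++ [-1])) := by
  have hlen : q.length ≠ 0 := by simpa using hq
  have hent : ∀ i (hi : i < (-1 :: (q ++ [-1])).length),
      ent (-1 :: (q ++ [-1])) i = (-1 :: (q ++ [-1]))[i] := fun i hi => List.getD_eq_getElem _ _ hi
  refine ⟨by simp; omega, rfl, ?_, fun i hi hi' => ?_, fun i hi => ?_⟩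
  · simp [ent]
  · obtain ⟨j, rfl⟩ : ∃ j, i = j + 1 := ⟨i - 1, by omega⟩
    have hj : j < q.length := by simp at hi'; omega
    have hentry : ent (-1 :: (q ++ [-1])) (j + 1) = q[j] := by
      simp [ent, hj, List.getElem?_append_left]
    exact hentry ▸ hbound _ (List.getElem_mem hj)
  · rw [hent i (by simp at hi ⊢; omega), hent (i + 1) (by simp at hi ⊢; omega)]
    exact hchain.getElem i (by simp at hi ⊢; omega)

end ScatteringSequences

def bounces (n : ℤ) : ℕ → List ℤ → List ℤ
  | 0, r => r
  | c + 1, r => (n + 1) :: n :: bounces n c r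

/-- `climb k n d r` continues a walk standing at level `n`: it upcrosses each level `j` with
`n < j ≤ n + d` exactly `k j` times, giving up at the first such `j` with `k j = 0`, returns to
`n` and then takes the steps `r`. -/
def climb (k : ℕ → ℕ) : ℕ → ℕ → List ℤ → List ℤ
  | _, 0, r => r
  | n, d + 1, r =>
    if k (n + 1) = 0 then r
    else ((n : ℤ) + 1) :: climb k (n + 1) d (n :: bounces n (k (n + 1) - 1) r)

theorem bounces_append (n : ℤ) (c : ℕ) (r s : List ℤ) :
    bounces n c r ++ s = bounces n c (r ++ s) := by
  induction c with
  | zero => rfl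
  | succ c ih => simp [bounces, ih]

theorem climb_append (k : ℕ → ℕ) (n d : ℕ) (r s : List ℤ) :
    climb k n d r ++ s = climb k n d (r ++ s) := by
  induction d generalizing n r with
  | zero => rfl
  | succ d ih => unfold climb; split_ifs <;> simp [ih, bounces_append]

theorem mem_of_mem_bounces {n x : ℤ} {c : ℕ} {r : List ℤ} (hx : x ∈ bounces n c r) :
    x = n ∨ x = n + 1 ∨ x ∈ r := by
  induction c with
  | zero => exact Or.inr (Or.inr hx)
  | succ c ih =>
    simp only [bounces, List.mem_cons] at hx
    rcases hx with hx | hx | hx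
    exacts [Or.inr (Or.inl hx), Or.inl hx, ih hx]

theorem mem_of_mem_climb {k : ℕ → ℕ} {n d : ℕ} {r : List ℤ} {x : ℤ} (hx : x ∈ climb k n d r) :
    (n ≤ x ∧ x ≤ n + d) ∨ x ∈ r := by
  induction d generalizing n r with
  | zero => exact Or.inr hx
  | succ d ih =>
    unfold climb at hx
    split_ifs at hx
    · exact Or.inr hx
    simp only [List.mem_cons] at hx
    rcases hx with hx | hx
    · left; omega
    rcases ih hx with hx | hx
    · left; push_cast at hx; omega
    rcases List.mem_cons.mp hx with hx | hx
    · left; omega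
    rcases mem_of_mem_bounces hx with hx | hx | hx
    · left; omega
    · left; omega
    · exact Or.inr hx

theorem isChain_bounces {n : ℤ} {c : ℕ} {r : List ℤ}
    (hr : (n :: r).IsChain fun a b => |b - a| = 1) :
    (n :: bounces n c r).IsChain fun a b => |b - a| = 1 := by
  induction c with
  | zero => exact hr
  | succ c ih => simpa [bounces] using ih

theorem isChain_climb {k : ℕ → ℕ} {n d : ℕ} {r : List ℤ}
    (hr : ((n : ℤ) :: r).IsChain fun a b => |b - a| = 1) :
    ((n : ℤ) :: climb k n d r).IsChain fun a b => |b - a| = 1 := by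
  induction d generalizing n r with
  | zero => exact hr
  | succ d ih =>
    unfold climb
    split_ifs
    · exact hr
    refine List.IsChain.cons_cons (by simp) ?_
    have := @ih (n + 1) (n :: bounces n (k (n + 1) - 1) r)
      (List.IsChain.cons_cons (by simp) (isChain_bounces hr))
    simpa using this

theorem upcrossCount_bounces (m n : ℤ) (c : ℕ) (r : List ℤ) :
    upcrossCount m n (bounces n c r) = (if m = n + 1 then c else 0) + upcrossCount m n r := by
  induction c with
  | zero => simp [bounces]
  | succ c ih =>
    simp only [bounces, upcrossCount, ih]
    split_ifs <;> omega

theorem upcrossCount_climb {k : ℕ → ℕ} (hk : ∀ j, k j = 0 → k (j + 1) = 0) (m n d : ℕ)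
    (r : List ℤ) :
    upcrossCount m n (climb k n d r) = (if n < m ∧ m ≤ n + d then k m else 0) +
      upcrossCount m n r := by
  induction d generalizing n r with
  | zero => simp [climb]
  | succ d ih =>
    by_cases hk0 : k (n + 1) = 0
    · have hzero : ∀ j, n + 1 ≤ j → k j = 0 := fun j hj =>
        Nat.le_induction hk0 (fun j _ => hk j) j hj
      rw [climb, if_pos hk0]
      split_ifs with hm
      · simp [hzero m (by omega)]
      · simp
    · have ih' := ih (n + 1) (n :: bounces n (k (n + 1) - 1) r)
      push_cast at ih'
      rw [climb, if_neg hk0, upcrossCount, ih', upcrossCount, upcrossCount_bounces]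
      obtain rfl | hm := eq_or_ne m (n + 1)
      · simp; omega
      · split_ifs <;> omega

theorem isScat_climb (M : ℕ) (k : ℕ → ℕ) : IsScat M (-1 :: 0 :: climb k 0 M [-1]) := by
  have hbound : ∀ x ∈ 0 :: climb k 0 M [], 0 ≤ x ∧ x ≤ M := by
    refine List.forall_mem_cons.mpr ⟨by omega, fun x hx => ?_⟩
    simpa using mem_of_mem_climb hx
  have hclimb : (((0 : ℕ) : ℤ) :: climb k 0 M [-1]).IsChain fun a b => |b - a| = 1 :=
    isChain_climb (by simp)
  have hchain : (-1 :: 0 :: climb k 0 M [-1]).IsChain fun a b : ℤ => |b - a| = 1 :=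
    List.IsChain.cons_cons (by norm_num) (by simpa using hclimb)
  have := isScat_of_isChain (List.cons_ne_nil 0 _) hbound (by rwa [List.cons_append, climb_append])
  rwa [List.cons_append, climb_append] at this

theorem kappa_climb {M : ℕ} {k : ℕ → ℕ} (hk : ∀ j, k j = 0 → k (j + 1) = 0) (n : Fin (M + 1)) :
    kappa M (-1 :: 0 :: climb k 0 M [-1]) n = if (n : ℕ) = 0 then 1 else k n := by
  have hclimb := upcrossCount_climb hk n 0 M [-1]
  rw [Nat.cast_zero] at hclimb
  rw [kappa_cons_eq_upcrossCount (isScat_climb M k), upcrossCount, hclimb]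
  have := n.is_lt
  split_ifs <;> simp [upcrossCount] <;> omega

theorem kappa_range_general (M : ℕ) :
    (∀ p : List ℤ, IsScat M p →
      kappa M p 0 = 1 ∧ ∀ n, kappa M p n = 0 → ktilde M (kappa M p) n = 0) ∧
    (∀ k : Fin (M + 1) → ℕ, k 0 = 1 → (∀ n, k n = 0 → ktilde M k n = 0) →
      ∃ p : List ℤ, IsScat M p ∧ kappa M p = k) := by
  refine ⟨fun p hp => ⟨kappa_zero_of_isScat hp, fun n hn => ?_⟩, fun k hk0 hk => ?_⟩
  · unfold ktilde
    split_ifs with h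
    · rw [kappa_eq_zero_iff hp] at hn ⊢
      exact fun x hx => (hn x hx).trans (by simp)
    · rfl
  · set k' : ℕ → ℕ := fun j => if h : j < M + 1 then k ⟨j, h⟩ else 0
    have hk' : ∀ j, k' j = 0 → k' (j + 1) = 0 := by
      intro j hj
      by_cases hj1 : j + 1 < M + 1
      · have hj0 : j < M + 1 := by omega
        have := hk ⟨j, hj0⟩ (by simpa only [k', dif_pos hj0] using hj)
        simpa only [k', ktilde, dif_pos hj1] using this
      · simp only [k', dif_neg hj1]
    refine ⟨_, isScat_climb M k', funext fun n => ?_⟩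
    rw [kappa_climb hk']
    split_ifs with hn
    · obtain rfl : n = 0 := Fin.ext hn
      exact hk0.symm
    · exact dif_pos n.is_lt

/-- The image of `S_M` under the transit count map `κ` is exactly `𝔏_M`:
every `κ(p)` lies in `𝔏_M`, and every `k ∈ 𝔏_M` is realized by some
scattering sequence. -/
theorem kappa_range (M : ℕ) (hM : 1 ≤ M) :
    (∀ p : List ℤ, IsScat M p →
      kappa M p 0 = 1 ∧ ∀ n, kappa M p n = 0 → ktilde M (kappa M p) n = 0) ∧
    (∀ k : Fin (M + 1) → ℕ, k 0 = 1 → (∀ n, k n = 0 → ktilde M k n = 0) →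
      ∃ p : List ℤ, IsScat M p ∧ kappa M p = k) :=
  kappa_range_general M
end

section
/- Let M ≥ 1 be an integer and let k ∈ 𝔏_M, with k̃ = (k_1, …, k_M, 0) and u = min{𝟙, k̃}. Consider the multivariate polynomial in variables X_0, …, X_M over the rationals defined by P_k = Σ_{b : u ≤ b ≤ min{k, k̃}} binom(k, b) · binom(k̃ − u, b − u) · (−X)^{k̃−b} · X^{k−b} · (𝟙 − X²)^{b}, where (−X)^{d} = ∏_n (−X_n)^{d_n}, X^{d} = ∏_n X_n^{d_n}, and (𝟙 − X²)^{b} = ∏_n (1 − X_n²)^{b_n}. Then P_k has total degree exactly Σ_{n=0}^{M} (k_n + k̃_n). -/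
open Polynomial

namespace Polynomial

section CommSemiring

variable {R : Type*} [CommSemiring R]

theorem coeff_prod_sum_of_natDegree_le {ι : Type*} (s : Finset ι) (f : ι → R[X]) (d : ι → ℕ)
    (h : ∀ i ∈ s, (f i).natDegree ≤ d i) :
    (∏ i ∈ s, f i).coeff (∑ i ∈ s, d i) = ∏ i ∈ s, (f i).coeff (d i) := by
  classical
  induction s using Finset.induction_on with
  | empty => simp
  | insert j s hj ih =>
    rw [Finset.forall_mem_insert] at h
    rw [Finset.prod_insert hj, Finset.sum_insert hj, Finset.prod_insert hj,
      coeff_mul_add_eq_of_natDegree_le h.1 ((natDegree_prod_le _ _).trans (Finset.sum_le_sum h.2)),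
      ih h.2]

end CommSemiring

variable {R : Type*} [CommRing R]

noncomputable def amplitudeFactor (c a e s : ℕ) : R[X] :=
  (c : R[X]) * (-X) ^ a * X ^ e * (1 - X ^ 2) ^ s

theorem natDegree_amplitudeFactor_le (c a e s : ℕ) :
    (amplitudeFactor c a e s : R[X]).natDegree ≤ a + e + 2 * s := by
  unfold amplitudeFactor
  compute_degree
  omega

theorem coeff_amplitudeFactor (c a e s : ℕ) :
    (amplitudeFactor c a e s : R[X]).coeff (a + e + 2 * s) = c * (-1) ^ (a + s) := by
  have hsq : ((1 - X ^ 2 : R[X]) ^ s).coeff (2 * s) = (-1) ^ s := by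
    rw [mul_comm, coeff_pow_of_natDegree_le (by compute_degree!)]
    simp [coeff_one]
  calc _ = (C ((c : R) * (-1) ^ a) * (X ^ (a + e) * (1 - X ^ 2) ^ s)).coeff (a + e + 2 * s) := by
        congr 1
        simp only [amplitudeFactor, neg_pow (X : R[X]), map_mul, map_pow, map_neg, map_one,
          map_natCast]
        ring
    _ = _ := by
        rw [coeff_C_mul, show a + e + 2 * s = 2 * s + (a + e) by ring, coeff_X_pow_mul, hsq]
        ring

end Polynomial

namespace MvPolynomial

variable {R σ : Type*} [CommSemiring R]

theorem totalDegree_aeval_X_le (p : R[X]) (i : σ) :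
    (Polynomial.aeval (X i : MvPolynomial σ R) p).totalDegree ≤ p.natDegree := by
  conv_lhs => rw [p.as_sum_range_C_mul_X_pow]
  simp only [map_sum, map_mul, Polynomial.aeval_C, map_pow, Polynomial.aeval_X, algebraMap_eq,
    C_mul_X_pow_eq_monomial]
  refine totalDegree_finsetSum_le fun n hn => (totalDegree_monomial_le _ _).trans ?_
  simpa [Finset.mem_range, Nat.lt_succ_iff] using hn

theorem natDegree_aeval_X_le_totalDegree (p : MvPolynomial σ R) :
    (aeval (fun _ => (Polynomial.X : R[X])) p).natDegree ≤ p.totalDegree := by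
  classical
  conv_lhs => rw [p.as_sum]
  rw [map_sum]
  refine Polynomial.natDegree_sum_le_of_forall_le _ _ fun d hd => ?_
  rw [aeval_monomial, Finsupp.prod, Finset.prod_pow_eq_pow_sum]
  exact (natDegree_C_mul_X_pow_le _ _).trans (le_totalDegree hd)

end MvPolynomial

section AmplitudeSum

open MvPolynomial

variable {R ι σ : Type*} [CommRing R] [Fintype σ]
  (S : Finset ι) (c a e s : ι → σ → ℕ) {A E : σ → ℕ}

noncomputable def amplitudeSum : MvPolynomial σ R :=
  ∑ b ∈ S, ∏ n, Polynomial.aeval (X n) (amplitudeFactor (c b n) (a b n) (e b n) (s b n) : R[X])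

variable {S c a e s}

theorem totalDegree_amplitudeSum_le (ha : ∀ b ∈ S, ∀ n, a b n + s b n = A n)
    (he : ∀ b ∈ S, ∀ n, e b n + s b n = E n) :
    (amplitudeSum S c a e s : MvPolynomial σ R).totalDegree ≤ ∑ n, (A n + E n) := by
  refine totalDegree_finsetSum_le fun b hb => (totalDegree_finsetProd _ _).trans <|
    Finset.sum_le_sum fun n _ => (totalDegree_aeval_X_le _ _).trans <|
      (natDegree_amplitudeFactor_le ..).trans ?_
  have := ha b hb n
  have := he b hb n
  omega

theorem coeff_aeval_X_amplitudeSum (ha : ∀ b ∈ S, ∀ n, a b n + s b n = A n)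
    (he : ∀ b ∈ S, ∀ n, e b n + s b n = E n) :
    (MvPolynomial.aeval (fun _ => (Polynomial.X : R[X]))
      (amplitudeSum S c a e s : MvPolynomial σ R)).coeff (∑ n, (A n + E n)) =
      ((∑ b ∈ S, ∏ n, c b n : ℕ) : R) * ∏ n, (-1) ^ A n := by
  simp only [amplitudeSum, map_sum, map_prod, Polynomial.finsetSum_coeff, Nat.cast_sum,
    Finset.sum_mul]
  refine Finset.sum_congr rfl fun b hb => ?_
  have hdeg : ∑ n, (A n + E n) = ∑ n, (a b n + e b n + 2 * s b n) :=
    Finset.sum_congr rfl fun n _ => by have := ha b hb n; have := he b hb n; omega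
  simp only [← Polynomial.aeval_algHom_apply, MvPolynomial.aeval_X, Polynomial.aeval_X_left_apply]
  rw [hdeg, Polynomial.coeff_prod_sum_of_natDegree_le _ _ _ fun n _ =>
    natDegree_amplitudeFactor_le .., Nat.cast_prod, ← Finset.prod_mul_distrib]
  exact Finset.prod_congr rfl fun n _ => by rw [coeff_amplitudeFactor, ha b hb n]

theorem totalDegree_amplitudeSum [CharZero R] (ha : ∀ b ∈ S, ∀ n, a b n + s b n = A n)
    (he : ∀ b ∈ S, ∀ n, e b n + s b n = E n) (hc : ∑ b ∈ S, ∏ n, c b n ≠ 0) :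
    (amplitudeSum S c a e s : MvPolynomial σ R).totalDegree = ∑ n, (A n + E n) := by
  refine (totalDegree_amplitudeSum_le ha he).antisymm <|
    (Polynomial.le_natDegree_of_ne_zero ?_).trans (natDegree_aeval_X_le_totalDegree _)
  have hsign : IsUnit (∏ n, (-1 : R) ^ A n) := IsUnit.prod_univ_iff.2 fun n => isUnit_one.neg.pow _
  rw [coeff_aeval_X_amplitudeSum ha he, Ne, hsign.mul_left_eq_zero]
  exact_mod_cast hc

end AmplitudeSum

theorem min_one_ktilde_le {M : ℕ} {k : Fin (M + 1) → ℕ}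
    (hk : ∀ n, k n = 0 → ktilde M k n = 0) (n : Fin (M + 1)) : min 1 (ktilde M k n) ≤ k n := by
  rcases Nat.eq_zero_or_pos (k n) with h | h
  · simp [hk n h]
  · exact (min_le_left _ _).trans h

open MvPolynomial in
theorem amplitude_total_degree_general (M : ℕ)
    (k : Fin (M + 1) → ℕ) (hk1 : ∀ n, k n = 0 → ktilde M k n = 0) :
    (∑ b ∈ Finset.Icc (fun n => min 1 (ktilde M k n))
        (fun n => min (k n) (ktilde M k n)),
      ∏ n : Fin (M + 1),
        (((k n).choose (b n) *
          (ktilde M k n - min 1 (ktilde M k n)).choose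
            (b n - min 1 (ktilde M k n)) : ℕ) : MvPolynomial (Fin (M + 1)) ℚ) *
          (-(X n : MvPolynomial (Fin (M + 1)) ℚ)) ^ (ktilde M k n - b n) *
          (X n : MvPolynomial (Fin (M + 1)) ℚ) ^ (k n - b n) *
          (1 - (X n : MvPolynomial (Fin (M + 1)) ℚ) ^ 2) ^ (b n)).totalDegree =
      ∑ n : Fin (M + 1), (k n + ktilde M k n) := by
  set u := fun n => min 1 (ktilde M k n)
  set S := Finset.Icc u fun n => min (k n) (ktilde M k n)
  have hS : ∀ b ∈ S, ∀ n, b n ≤ k n ∧ b n ≤ ktilde M k n :=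
    fun b hb n => le_min_iff.1 ((Finset.mem_Icc.1 hb).2 n)
  have hu : u ∈ S := Finset.mem_Icc.2
    ⟨le_rfl, fun n => le_min (min_one_ktilde_le hk1 n) (min_le_right _ _)⟩
  have hc : ∑ b ∈ S, ∏ n, (k n).choose (b n) * (ktilde M k n - u n).choose (b n - u n) ≠ 0 := by
    refine ne_of_gt <|
      Finset.sum_pos' (fun _ _ => Nat.zero_le _) ⟨u, hu, Finset.prod_pos fun n _ => ?_⟩
    exact Nat.mul_pos (Nat.choose_pos (min_one_ktilde_le hk1 n)) (by simp)
  have key := totalDegree_amplitudeSum (R := ℚ) (a := fun b n => ktilde M k n - b n)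
    (e := fun b n => k n - b n) (s := fun b n => b n)
    (fun b hb n => Nat.sub_add_cancel (hS b hb n).2)
    (fun b hb n => Nat.sub_add_cancel (hS b hb n).1) hc
  convert key using 1
  · simp [amplitudeSum, amplitudeFactor, u]
  · exact Finset.sum_congr rfl fun n _ => add_comm _ _

open MvPolynomial in
/-- The reflection amplitude `a(R, k)`, viewed as a polynomial in the
reflection coefficients, has total degree exactly `Σ_n (k_n + k̃_n)`. -/
theorem amplitude_total_degree (M : ℕ) (hM : 1 ≤ M)
    (k : Fin (M + 1) → ℕ) (hk0 : k 0 = 1) (hk1 : ∀ n, k n = 0 → ktilde M k n = 0) :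
    (∑ b ∈ Finset.Icc (fun n => min 1 (ktilde M k n))
        (fun n => min (k n) (ktilde M k n)),
      ∏ n : Fin (M + 1),
        (((k n).choose (b n) *
          (ktilde M k n - min 1 (ktilde M k n)).choose
            (b n - min 1 (ktilde M k n)) : ℕ) : MvPolynomial (Fin (M + 1)) ℚ) *
          (-(X n : MvPolynomial (Fin (M + 1)) ℚ)) ^ (ktilde M k n - b n) *
          (X n : MvPolynomial (Fin (M + 1)) ℚ) ^ (k n - b n) *
          (1 - (X n : MvPolynomial (Fin (M + 1)) ℚ) ^ 2) ^ (b n)).totalDegree =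
      ∑ n : Fin (M + 1), (k n + ktilde M k n) :=
  amplitude_total_degree_general M k hk1
end
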